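/- arXiv:2602.14801 — 7 statements merged into one kernel-verified Lean document; each statement's English description precedes it below -/
import Mathlib

section
/- Let f : ℝ → ℂ be infinitely differentiable on (0,∞) and suppose ∑_{n=0}^∞ (2^n/(2n+1)!) ∫_0^∞ x^{2n+1} |f^{(n)}(x)|² dx < ∞, where f^{(n)} is the n-th derivative of f within (0,∞). Then f is real analytic on (0,∞). -/
set_option maxHeartbeats 1600000

open MeasureTheory Set
open scoped ENNReal NNReal

lemma fact_bound (n : ℕ) : ((2*n+1).factorial : ℝ) ≤ 4 * 16 ^ n * (n.factorial : ℝ)^2 := by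
  induction n with
  | zero => norm_num
  | succ n ih =>
    have h1 : (2*(n+1)+1) = (2*n+1) + 2 := by ring
    rw [h1]
    have e : ((2*n+1+2).factorial : ℝ) = ((2*(n:ℝ)+3) * (2*(n:ℝ)+2)) * ((2*n+1).factorial : ℝ) := by
      push_cast [show (2*n+1+2) = (2*n+2)+1 by ring, Nat.factorial_succ]
      ring
    rw [e]
    have e2 : ((n+1).factorial : ℝ)^2 = ((n:ℝ)+1)^2 * (n.factorial : ℝ)^2 := by
      push_cast [Nat.factorial_succ]; ring
    rw [e2]
    have hn : (0:ℝ) ≤ (n:ℝ) := by positivity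
    have hfac : (1:ℝ) ≤ (n.factorial : ℝ) := by exact_mod_cast Nat.one_le_iff_ne_zero.2 n.factorial_ne_zero
    calc (2*(n:ℝ)+3) * (2*(n:ℝ)+2) * ((2*n+1).factorial : ℝ)
        ≤ (2*(n:ℝ)+3) * (2*(n:ℝ)+2) * (4 * 16 ^ n * (n.factorial : ℝ)^2) := by
          apply mul_le_mul_of_nonneg_left ih; positivity
      _ ≤ 16*((n:ℝ)+1)^2 * (4 * 16 ^ n * (n.factorial : ℝ)^2) := by
          apply mul_le_mul_of_nonneg_right (by nlinarith) (by positivity)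
      _ = 4 * 16 ^ (n+1) * ((↑n + 1) ^ 2 * ↑n.factorial ^ 2) := by ring

lemma iter_eq (f : ℝ → ℂ) (hf : ContDiffOn ℝ (⊤ : ℕ∞) f (Ioi 0)) {c b : ℝ} (hc : 0 < c) (hcb : c < b)
    (n : ℕ) : ∀ y ∈ Icc c b, iteratedDerivWithin n f (Icc c b) y = iteratedDerivWithin n f (Ioi 0) y := by
  induction n with
  | zero => intro y _; simp
  | succ n ih =>
    intro y hy
    have hy0 : (0:ℝ) < y := lt_of_lt_of_le hc hy.1
    have hdiff : DifferentiableOn ℝ (iteratedDerivWithin n f (Ioi 0)) (Ioi 0) :=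
      hf.differentiableOn_iteratedDerivWithin (by exact_mod_cast lt_top_iff_ne_top.2 (by simp))
        (uniqueDiffOn_Ioi 0)
    have hdAt : DifferentiableAt ℝ (iteratedDerivWithin n f (Ioi 0)) y :=
      hdiff.differentiableAt (isOpen_Ioi.mem_nhds hy0)
    rw [iteratedDerivWithin_succ,
        iteratedDerivWithin_succ]
    rw [derivWithin_congr (fun t ht => ih t ht) (ih y hy)]
    rw [derivWithin_of_isOpen isOpen_Ioi hy0]
    exact (hdAt.hasDerivAt.hasDerivWithinAt).derivWithin ((uniqueDiffOn_Icc hcb) y hy)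

lemma analyticAt_of_bounds (f : ℝ → ℂ) (hf : ContDiffOn ℝ (⊤ : ℕ∞) f (Ioi 0)) {a b x0 C K : ℝ}
    (ha : 0 < a) (hax : a < x0) (hxb : x0 < b) (hC : 0 ≤ C) (hK : 0 < K)
    (hbd : ∀ n : ℕ, ∀ y ∈ Icc a b, ‖iteratedDerivWithin n f (Ioi 0) y‖ ≤ C * K^n * n.factorial) :
    AnalyticAt ℝ f x0 := by
  set δ : ℝ := min (min (x0 - a) (b - x0)) (1/(2*K)) with hδdef
  have hδ : 0 < δ := by
    apply lt_min (lt_min (by linarith) (by linarith)); positivity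
  have hδa : δ ≤ x0 - a := le_trans (min_le_left _ _) (min_le_left _ _)
  have hδb : δ ≤ b - x0 := le_trans (min_le_left _ _) (min_le_right _ _)
  have hδK : K * δ ≤ 1/2 := by
    have h1 : δ ≤ 1/(2*K) := min_le_right _ _
    have h2 : δ * (2*K) ≤ 1/(2*K) * (2*K) := by
      apply mul_le_mul_of_nonneg_right h1 (by positivity)
    rw [one_div, inv_mul_cancel₀ (by positivity)] at h2
    nlinarith
  set c : ℝ := x0 - δ/2 with hcdef
  have hc0 : 0 < c := by have := hδa; simp only [hcdef]; linarith
  have hca : a ≤ c := by simp only [hcdef]; linarith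
  have hcx : c < x0 := by simp only [hcdef]; linarith
  have hcb : c < b := lt_trans hcx hxb
  have hsubab : Icc c b ⊆ Icc a b := Icc_subset_Icc hca le_rfl
  -- the derivative coefficients
  set d : ℕ → ℂ := fun n => iteratedDerivWithin n f (Icc c b) c with hd
  have hdbd : ∀ n : ℕ, ‖d n‖ ≤ C * K^n * n.factorial := by
    intro n
    show ‖iteratedDerivWithin n f (Icc c b) c‖ ≤ _
    rw [iter_eq f hf hc0 hcb n c (left_mem_Icc.2 hcb.le)]
    exact hbd n c (hsubab (left_mem_Icc.2 hcb.le))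
  set p : FormalMultilinearSeries ℝ ℝ ℂ :=
    fun n => ContinuousMultilinearMap.mkPiRing ℝ (Fin n) ((n.factorial : ℝ)⁻¹ • d n) with hp
  have hpnorm : ∀ n : ℕ, ‖p n‖ ≤ C * K^n := by
    intro n
    rw [hp]
    simp only [ContinuousMultilinearMap.norm_mkPiRing, norm_smul, norm_inv,
      Real.norm_natCast]
    calc (n.factorial : ℝ)⁻¹ * ‖d n‖ ≤ (n.factorial : ℝ)⁻¹ * (C * K^n * n.factorial) := by
          apply mul_le_mul_of_nonneg_left (hdbd n) (by positivity)
      _ = C * K^n := by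
          field_simp
  -- radius bound
  have hrad : ENNReal.ofReal δ ≤ p.radius := by
    rw [ENNReal.ofReal]
    apply p.le_radius_of_bound C
    intro n
    calc ‖p n‖ * (δ.toNNReal : ℝ)^n ≤ (C * K^n) * δ^n := by
          apply mul_le_mul (hpnorm n) _ (by positivity) (by positivity)
          rw [Real.coe_toNNReal _ hδ.le]
      _ = C * (K*δ)^n := by ring
      _ ≤ C * 1 := by
          apply mul_le_mul_of_nonneg_left _ hC
          apply pow_le_one₀ (by positivity) (by linarith)
      _ = C := mul_one C
  -- the power series statement
  have hps : HasFPowerSeriesWithinOnBall f p (Ioo c b) c (ENNReal.ofReal δ) := by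
    refine ⟨hrad, by simpa using hδ, ?_⟩
    intro y hmem hball
    -- basic facts about y
    have hy0 : 0 ≤ y := by
      rcases hmem with h | h
      · simp at h; simp [h]
      · have := (mem_Ioo.1 h).1; linarith
    have hyδ : y < δ := by
      simp only [EMetric.mem_ball, edist_zero_right] at hball
      have h1 : ENNReal.ofReal ‖y‖ < ENNReal.ofReal δ := by
        rwa [ENNReal.ofReal, Real.toNNReal_eq_nnnorm_of_nonneg (norm_nonneg y), nnnorm_norm]
      have h2 := (ENNReal.ofReal_lt_ofReal_iff hδ).1 h1
      exact lt_of_le_of_lt (le_abs_self y) h2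
    have hsubIoi : Icc c b ⊆ Ioi 0 := fun t ht => lt_of_lt_of_le hc0 ht.1
    have hxmem : c + y ∈ Icc c b := by
      constructor
      · linarith
      · have : c + y < c + δ := by linarith
        have h3 : c + δ ≤ b := by simp only [hcdef]; linarith
        linarith
    have happ : ∀ n : ℕ, (p n fun _ : Fin n => y) = (y^n * ((n.factorial : ℝ))⁻¹) • d n := by
      intro n
      show (ContinuousMultilinearMap.mkPiRing ℝ (Fin n) ((n.factorial : ℝ)⁻¹ • d n)) (fun _ => y)
        = _
      rw [ContinuousMultilinearMap.mkPiRing_apply]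
      rw [Finset.prod_const, Finset.card_univ, Fintype.card_fin, smul_smul]
    set g : ℕ → ℂ := fun n => (y^n * ((n.factorial : ℝ))⁻¹) • d n with hg
    have hqnn : 0 ≤ K * y := by positivity
    have hq1 : K * y < 1 := by nlinarith
    have hgbd : ∀ n : ℕ, ‖g n‖ ≤ C * (K*y)^n := by
      intro n
      show ‖(y^n * ((n.factorial : ℝ))⁻¹) • d n‖ ≤ _
      rw [norm_smul, Real.norm_eq_abs, abs_of_nonneg (by positivity)]
      calc y^n * ((n.factorial : ℝ))⁻¹ * ‖d n‖
          ≤ y^n * ((n.factorial : ℝ))⁻¹ * (C * K^n * n.factorial) := by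
            apply mul_le_mul_of_nonneg_left (hdbd n) (by positivity)
        _ = C * (K*y)^n := by
            have : ((n.factorial : ℝ)) ≠ 0 := by positivity
            field_simp
            ring
    have hsummable : Summable g := by
      apply Summable.of_norm_bounded ((summable_geometric_of_lt_one hqnn hq1).mul_left C) hgbd
    have hS : HasSum g (∑' n, g n) := hsummable.hasSum
    have htaylor : ∀ N : ℕ, ∑ n ∈ Finset.range (N+1), g n
        = taylorWithinEval f N (Icc c b) c (c+y) := by
      intro N
      rw [taylor_within_apply]
      apply Finset.sum_congr rfl
      intro k _
      show (y^k * ((k.factorial : ℝ))⁻¹) • d k = _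
      rw [add_sub_cancel_left, mul_comm]
    have hrem : ∀ N : ℕ, ‖f (c+y) - taylorWithinEval f N (Icc c b) c (c+y)‖
        ≤ C * ((N:ℝ)+1) * (K*y)^(N+1) := by
      intro N
      have hb1 := taylor_mean_remainder_bound (n := N) hcb.le
        ((hf.mono hsubIoi).of_le (by exact_mod_cast le_top)) hxmem (C := C * K^(N+1) * (N+1).factorial) ?_
      · refine le_trans (by simpa [add_sub_cancel_left] using hb1) (le_of_eq ?_)
        rw [Nat.factorial_succ]
        have hfne : ((N.factorial : ℝ)) ≠ 0 := by positivity
        push_cast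
        field_simp
        ring
      · intro z hz
        rw [iter_eq f hf hc0 hcb _ z hz]
        exact hbd _ z (hsubab hz)
    have hlim : Filter.Tendsto (fun N : ℕ => C * ((N:ℝ)+1) * (K*y)^(N+1)) Filter.atTop (nhds 0) := by
      have h0 := (tendsto_pow_const_mul_const_pow_of_lt_one 1 hqnn hq1)
      have h1 := h0.comp (Filter.tendsto_add_atTop_nat 1)
      have h2 := h1.const_mul C
      rw [mul_zero] at h2
      convert h2 using 2 with N
      simp [Function.comp]
      push_cast
      ring
    have hT : Filter.Tendsto (fun N => ∑ n ∈ Finset.range (N+1), g n) Filter.atTop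
        (nhds (f (c+y))) := by
      rw [tendsto_iff_norm_sub_tendsto_zero]
      apply squeeze_zero (fun N => norm_nonneg _) _ hlim
      intro N
      rw [htaylor N, norm_sub_rev]
      exact hrem N
    have hT2 : Filter.Tendsto (fun N => ∑ n ∈ Finset.range (N+1), g n) Filter.atTop
        (nhds (∑' n, g n)) := hS.tendsto_sum_nat.comp (Filter.tendsto_add_atTop_nat 1)
    have heq : (∑' n, g n) = f (c+y) := tendsto_nhds_unique hT2 hT
    rw [show (fun n : ℕ => p n fun _ : Fin n => y) = g from funext happ]
    exact heq ▸ hS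
  -- conclude
  have hx0mem : x0 ∈ insert c (Ioo c b) ∩ Metric.eball c (ENNReal.ofReal δ) := by
    constructor
    · exact mem_insert_of_mem _ ⟨hcx, hxb⟩
    · rw [EMetric.mem_ball, edist_dist, Real.dist_eq]
      apply ENNReal.ofReal_lt_ofReal_iff_of_nonneg (abs_nonneg _) |>.2
      rw [abs_of_nonneg (by simp [hcdef]; linarith)]
      simp only [hcdef]; linarith
  have hWithin : AnalyticWithinAt ℝ f (Ioo c b) x0 := hps.analyticWithinAt_of_mem hx0mem
  rw [← analyticWithinAt_univ]
  exact hWithin.mono_of_mem_nhdsWithin (by rw [nhdsWithin_univ]; exact Ioo_mem_nhds hcx hxb)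

lemma deriv_bounds (f : ℝ → ℂ) (hf : ContDiffOn ℝ (⊤ : ℕ∞) f (Ioi 0))
    (hsum :
      ∑' n : ℕ, ENNReal.ofReal ((2 : ℝ) ^ n / (Nat.factorial (2 * n + 1) : ℝ)) *
        ∫⁻ x in Ioi (0 : ℝ),
          ENNReal.ofReal (x ^ (2 * n + 1)) *
            (‖iteratedDerivWithin n f (Ioi 0) x‖₊ : ℝ≥0∞) ^ 2 ∂volume < ⊤)
    {a b : ℝ} (ha : 0 < a) (hab : a < b) :
    ∃ C K : ℝ, 0 ≤ C ∧ 0 < K ∧ ∀ n : ℕ, ∀ x ∈ Icc a b,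
      ‖iteratedDerivWithin n f (Ioi 0) x‖ ≤ C * K^n * n.factorial := by
  set g : ℕ → ℝ → ℂ := fun n => iteratedDerivWithin n f (Ioi 0) with hg
  set S : ℝ≥0∞ := ∑' n : ℕ, ENNReal.ofReal ((2 : ℝ) ^ n / (Nat.factorial (2 * n + 1) : ℝ)) *
        ∫⁻ x in Ioi (0 : ℝ), ENNReal.ofReal (x ^ (2 * n + 1)) *
            (‖iteratedDerivWithin n f (Ioi 0) x‖₊ : ℝ≥0∞) ^ 2 ∂volume with hSdef
  have hSne : S ≠ ⊤ := hsum.ne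
  set Sr : ℝ := S.toReal with hSr
  have hSr0 : 0 ≤ Sr := ENNReal.toReal_nonneg
  -- the real bound for ∫_{Ioc a b} ‖g n‖²
  set P : ℕ → ℝ := fun n => Sr * ((2*n+1).factorial : ℝ) / 2^n * (a⁻¹)^(2*n+1) + 1 with hP
  have hP1 : ∀ n, 1 ≤ P n := by
    intro n
    have : 0 ≤ Sr * ((2*n+1).factorial : ℝ) / 2^n * (a⁻¹)^(2*n+1) := by positivity
    simp only [hP]; linarith
  have hP0 : ∀ n, 0 < P n := fun n => lt_of_lt_of_le one_pos (hP1 n)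
  -- continuity of derivatives
  have hcont : ∀ m : ℕ, ContinuousOn (g m) (Icc a b) :=
    fun m => (hf.continuousOn_iteratedDerivWithin (by exact_mod_cast le_top) (uniqueDiffOn_Ioi 0)).mono
      (fun t ht => lt_of_lt_of_le ha ht.1)
  have hInt : ∀ m : ℕ, IntegrableOn (fun t => ‖g m t‖^2) (Ioc a b) volume :=
    fun m => (((hcont m).norm.pow 2).integrableOn_Icc).mono_set Ioc_subset_Icc_self
  -- the key integral bound
  have hJ : ∀ m : ℕ, ∫ t in Ioc a b, ‖g m t‖^2 ≤ P m := by
    intro m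
    set c : ℝ≥0∞ := ENNReal.ofReal ((2 : ℝ) ^ m / (Nat.factorial (2 * m + 1) : ℝ)) with hc
    have hc0 : c ≠ 0 := by
      simp only [hc, ne_eq, ENNReal.ofReal_eq_zero, not_le]
      positivity
    have hcne : c ≠ ⊤ := ENNReal.ofReal_ne_top
    set I : ℝ≥0∞ := ∫⁻ x in Ioi (0 : ℝ), ENNReal.ofReal (x ^ (2 * m + 1)) *
            (‖iteratedDerivWithin m f (Ioi 0) x‖₊ : ℝ≥0∞) ^ 2 ∂volume with hI
    have hIS : c * I ≤ S := by
      rw [hSdef]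
      exact ENNReal.le_tsum m
    have hIle : I ≤ S / c := by
      rw [ENNReal.le_div_iff_mul_le (Or.inl hc0) (Or.inl hcne)]
      rw [mul_comm]; exact hIS
    have hQne : ENNReal.ofReal ((a⁻¹)^(2*m+1)) * (S / c) ≠ ⊤ := by
      apply ENNReal.mul_ne_top ENNReal.ofReal_ne_top
      exact (ENNReal.div_lt_top hSne hc0).ne
    have hlin : ∫⁻ t in Ioc a b, ((‖g m t‖₊ : ℝ≥0∞))^2 ∂volume
        ≤ ENNReal.ofReal ((a⁻¹)^(2*m+1)) * (S / c) := by
      have step1 : ∫⁻ t in Ioc a b, ((‖g m t‖₊ : ℝ≥0∞))^2 ∂volume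
          ≤ ∫⁻ t in Ioc a b, ENNReal.ofReal ((a⁻¹)^(2*m+1)) *
              (ENNReal.ofReal (t ^ (2 * m + 1)) * (‖g m t‖₊ : ℝ≥0∞) ^ 2) ∂volume := by
        apply lintegral_mono_ae
        rw [ae_restrict_iff' measurableSet_Ioc]
        apply ae_of_all
        intro t ht
        rw [← mul_assoc, ← ENNReal.ofReal_mul (by positivity)]
        have h1 : (1:ℝ) ≤ (a⁻¹)^(2*m+1) * t^(2*m+1) := by
          rw [← mul_pow]
          apply one_le_pow₀
          rw [inv_mul_eq_div, le_div_iff₀ ha]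
          simpa using ht.1.le
        calc ((‖g m t‖₊ : ℝ≥0∞))^2 = 1 * ((‖g m t‖₊ : ℝ≥0∞))^2 := (one_mul _).symm
          _ ≤ ENNReal.ofReal ((a⁻¹)^(2*m+1) * t^(2*m+1)) * ((‖g m t‖₊ : ℝ≥0∞))^2 := by
              apply mul_le_mul_left
              exact ENNReal.one_le_ofReal.2 h1
      have step2 : ∫⁻ t in Ioc a b, ENNReal.ofReal ((a⁻¹)^(2*m+1)) *
              (ENNReal.ofReal (t ^ (2 * m + 1)) * (‖g m t‖₊ : ℝ≥0∞) ^ 2) ∂volume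
          = ENNReal.ofReal ((a⁻¹)^(2*m+1)) * ∫⁻ t in Ioc a b,
              (ENNReal.ofReal (t ^ (2 * m + 1)) * (‖g m t‖₊ : ℝ≥0∞) ^ 2) ∂volume :=
        lintegral_const_mul' _ _ ENNReal.ofReal_ne_top
      have step3 : ∫⁻ t in Ioc a b,
              (ENNReal.ofReal (t ^ (2 * m + 1)) * (‖g m t‖₊ : ℝ≥0∞) ^ 2) ∂volume ≤ I := by
        rw [hI]
        exact lintegral_mono_set (fun t ht => lt_trans ha ht.1)
      calc ∫⁻ t in Ioc a b, ((‖g m t‖₊ : ℝ≥0∞))^2 ∂volume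
          ≤ _ := step1
        _ = _ := step2
        _ ≤ ENNReal.ofReal ((a⁻¹)^(2*m+1)) * I := mul_le_mul_right step3 _
        _ ≤ _ := mul_le_mul_right hIle _
    -- convert to real
    have heq : ∫ t in Ioc a b, ‖g m t‖^2 ∂volume
        = (∫⁻ t in Ioc a b, ((‖g m t‖₊ : ℝ≥0∞))^2 ∂volume).toReal := by
      rw [integral_eq_lintegral_of_nonneg_ae (ae_of_all _ (fun t => by positivity))
        ((hInt m).1)]
      congr 1
      apply lintegral_congr
      intro t
      rw [← enorm_eq_nnnorm, ← ofReal_norm (g m t), ← ENNReal.ofReal_pow (norm_nonneg _)]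
    rw [heq]
    calc (∫⁻ t in Ioc a b, ((‖g m t‖₊ : ℝ≥0∞))^2 ∂volume).toReal
        ≤ (ENNReal.ofReal ((a⁻¹)^(2*m+1)) * (S / c)).toReal :=
          ENNReal.toReal_mono hQne hlin
      _ = (a⁻¹)^(2*m+1) * (Sr / ((2 : ℝ) ^ m / (Nat.factorial (2 * m + 1) : ℝ))) := by
          rw [ENNReal.toReal_mul, ENNReal.toReal_div, ENNReal.toReal_ofReal (by positivity),
            ENNReal.toReal_ofReal (by positivity)]
      _ = Sr * ((2*m+1).factorial : ℝ) / 2^m * (a⁻¹)^(2*m+1) := by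
          rw [div_div_eq_mul_div]
          ring
      _ ≤ P m := by simp only [hP]; linarith
  -- pointwise bound via min point and FTC
  have hpt : ∀ n : ℕ, ∀ x ∈ Icc a b,
      ‖g n x‖ ≤ Real.sqrt (P n / (b - a)) + Real.sqrt ((b - a) * P (n+1)) := by
    intro n x hx
    -- min point
    obtain ⟨y, hy, hmin⟩ := isCompact_Icc.exists_isMinOn (nonempty_Icc.2 hab.le)
      (hcont n).norm
    have hminle : ∀ t ∈ Icc a b, ‖g n y‖ ≤ ‖g n t‖ := fun t ht => hmin ht
    have hsq : ‖g n y‖^2 * (b - a) ≤ P n := by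
      have h1 : ∫ t in Ioc a b, ‖g n y‖^2 ∂volume ≤ ∫ t in Ioc a b, ‖g n t‖^2 ∂volume := by
        apply setIntegral_mono_on (integrableOn_const measure_Ioc_lt_top.ne)
          (hInt n) measurableSet_Ioc
        intro t ht
        have := hminle t (Ioc_subset_Icc_self ht)
        have h0 : (0:ℝ) ≤ ‖g n y‖ := norm_nonneg _
        nlinarith
      rw [setIntegral_const, measureReal_def, Real.volume_Ioc, ENNReal.toReal_ofReal (by linarith),
        smul_eq_mul] at h1
      calc ‖g n y‖^2 * (b - a) = (b - a) * ‖g n y‖^2 := by ring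
        _ ≤ ∫ t in Ioc a b, ‖g n t‖^2 ∂volume := h1
        _ ≤ P n := hJ n
    have hny : ‖g n y‖ ≤ Real.sqrt (P n / (b - a)) := by
      have h2 : ‖g n y‖^2 ≤ P n / (b - a) := by
        rw [le_div_iff₀ (by linarith)]; exact hsq
      calc ‖g n y‖ = Real.sqrt (‖g n y‖^2) := (Real.sqrt_sq (norm_nonneg _)).symm
        _ ≤ _ := Real.sqrt_le_sqrt h2
    -- FTC
    have hderiv : ∀ t ∈ Ioi (0:ℝ), HasDerivAt (g n) (g (n+1) t) t := by
      intro t ht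
      have hdiff : DifferentiableOn ℝ (g n) (Ioi 0) :=
        hf.differentiableOn_iteratedDerivWithin
          (by exact_mod_cast lt_top_iff_ne_top.2 (by simp)) (uniqueDiffOn_Ioi 0)
      have hdAt : DifferentiableAt ℝ (g n) t := hdiff.differentiableAt (isOpen_Ioi.mem_nhds ht)
      have : g (n+1) t = deriv (g n) t := by
        show iteratedDerivWithin (n+1) f (Ioi 0) t = deriv (iteratedDerivWithin n f (Ioi 0)) t
        rw [iteratedDerivWithin_succ]
        exact derivWithin_of_isOpen isOpen_Ioi ht
      rw [this]
      exact hdAt.hasDerivAt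
    have hift : IntervalIntegrable (g (n+1)) volume y x :=
      ((hcont (n+1)).mono (uIcc_subset_Icc hy hx)).intervalIntegrable
    have hftc : ∫ t in y..x, g (n+1) t = g n x - g n y := by
      apply intervalIntegral.integral_eq_sub_of_hasDerivAt _ hift
      intro t ht
      have ht' : t ∈ Icc a b := uIcc_subset_Icc hy hx ht
      exact hderiv t (lt_of_lt_of_le ha ht'.1)
    -- bound the path integral
    set s : ℝ := Real.sqrt ((b - a) * P (n+1)) with hs
    have hs0 : 0 < s := Real.sqrt_pos.2 (by have := hP0 (n+1); nlinarith)
    have hssq : s^2 = (b - a) * P (n+1) := Real.sq_sqrt (by have := hP0 (n+1); nlinarith)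
    have hpath : ‖∫ t in y..x, g (n+1) t‖ ≤ s := by
      have hb1 : ‖∫ t in y..x, g (n+1) t‖ ≤ ∫ t in Set.uIoc y x, ‖g (n+1) t‖ ∂volume :=
        intervalIntegral.norm_integral_le_integral_norm_uIoc
      have hsub : Set.uIoc y x ⊆ Ioc a b := by
        apply Set.Ioc_subset_Ioc (le_min hy.1 hx.1) (max_le hy.2 hx.2)
      have hInt1 : IntegrableOn (fun t => ‖g (n+1) t‖) (Ioc a b) volume :=
        ((hcont (n+1)).norm.integrableOn_Icc).mono_set Ioc_subset_Icc_self
      have hb2 : ∫ t in Set.uIoc y x, ‖g (n+1) t‖ ∂volume ≤ ∫ t in Ioc a b, ‖g (n+1) t‖ ∂volume := by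
        apply setIntegral_mono_set hInt1 (ae_of_all _ (fun t => norm_nonneg _))
        exact HasSubset.Subset.eventuallyLE hsub
      -- pointwise AM-GM
      have hbnd : ∀ t ∈ Ioc a b, ‖g (n+1) t‖ ≤ (s/(b-a) + ‖g (n+1) t‖^2 * (b-a)/s)/2 := by
        intro t ht
        have h0 : (0:ℝ) ≤ ‖g (n+1) t‖ := norm_nonneg _
        have hba : (0:ℝ) < b - a := by linarith
        rw [le_div_iff₀ (by norm_num : (0:ℝ) < 2)]
        have hq : 2 * (s/(b-a)) * ‖g (n+1) t‖ ≤ (s/(b-a))^2 + ‖g (n+1) t‖^2 := by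
          nlinarith [sq_nonneg (s/(b-a) - ‖g (n+1) t‖)]
        have hpos : (0:ℝ) < s/(b-a) := by positivity
        -- multiply both sides by (b-a)/s > 0
        have := mul_le_mul_of_nonneg_right hq (le_of_lt (by positivity : (0:ℝ) < (b-a)/s))
        calc ‖g (n+1) t‖ * 2 = (2 * (s/(b-a)) * ‖g (n+1) t‖) * ((b-a)/s) := by
              field_simp
            _ ≤ ((s/(b-a))^2 + ‖g (n+1) t‖^2) * ((b-a)/s) := this
            _ = s/(b-a) * ((b-a)/s) * (s/(b-a)) + ‖g (n+1) t‖^2 * (b-a)/s := by ring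
            _ = s/(b-a) + ‖g (n+1) t‖^2 * (b-a)/s := by
              rw [div_mul_div_comm, mul_comm (b-a) s]
              rw [div_self (by positivity : s*(b-a) ≠ 0), one_mul]
      have hb3 : ∫ t in Ioc a b, ‖g (n+1) t‖ ∂volume
          ≤ ∫ t in Ioc a b, (s/(b-a) + ‖g (n+1) t‖^2 * (b-a)/s)/2 ∂volume := by
        apply setIntegral_mono_on hInt1 _ measurableSet_Ioc hbnd
        apply Integrable.div_const
        apply Integrable.add (integrableOn_const measure_Ioc_lt_top.ne)
        exact ((hInt (n+1)).mul_const _).div_const _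
      have hb4 : ∫ t in Ioc a b, (s/(b-a) + ‖g (n+1) t‖^2 * (b-a)/s)/2 ∂volume ≤ s := by
        have e3 : ∀ t, (s/(b-a) + ‖g (n+1) t‖^2 * (b-a)/s)/2
            = s/(b-a)/2 + ‖g (n+1) t‖^2 * ((b-a)/s/2) := by intro t; ring
        simp_rw [e3]
        rw [integral_add (integrableOn_const (C := s/(b-a)/2) measure_Ioc_lt_top.ne)
          ((hInt (n+1)).mul_const _)]
        rw [setIntegral_const, measureReal_def, Real.volume_Ioc, ENNReal.toReal_ofReal (by linarith),
          smul_eq_mul, integral_mul_const]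
        have hJn := hJ (n+1)
        have hba : (0:ℝ) < b - a := by linarith
        have h5 : (b-a) * (s/(b-a)/2) = s/2 := by field_simp
        rw [h5]
        have h6 : (∫ t in Ioc a b, ‖g (n+1) t‖^2 ∂volume) * ((b-a)/s/2)
            ≤ P (n+1) * ((b-a)/s/2) := by
          apply mul_le_mul_of_nonneg_right hJn (by positivity)
        have h7 : P (n+1) * ((b-a)/s/2) = s/2 := by
          have : P (n+1) * (b-a) = s^2 := by rw [hssq]; ring
          field_simp
          nlinarith
        linarith
      linarith
    -- combine
    have : g n x = g n y + ∫ t in y..x, g (n+1) t := by rw [hftc]; ring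
    rw [this]
    calc ‖g n y + ∫ t in y..x, g (n+1) t‖ ≤ ‖g n y‖ + ‖∫ t in y..x, g (n+1) t‖ := norm_add_le _ _
      _ ≤ Real.sqrt (P n / (b - a)) + s := add_le_add hny hpath
  -- assemble constants
  have hba : (0:ℝ) < b - a := by linarith
  set A : ℝ := max a⁻¹ 1 with hA
  have hA1 : (1:ℝ) ≤ A := le_max_right _ _
  have hAa : a⁻¹ ≤ A := le_max_left _ _
  set C₀ : ℝ := 4*Sr*A + 1 with hC₀
  have hC₀1 : (1:ℝ) ≤ C₀ := by nlinarith
  have hC₀0 : (0:ℝ) < C₀ := by linarith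
  set W : ℝ := 16*A^2 with hW
  have hW1 : (1:ℝ) ≤ W := by nlinarith
  have hW0 : (0:ℝ) < W := by linarith
  have hfacge : ∀ n : ℕ, (1:ℝ) ≤ (n.factorial : ℝ) := by
    intro n; exact_mod_cast Nat.one_le_iff_ne_zero.2 n.factorial_ne_zero
  have hPle : ∀ n : ℕ, P n ≤ C₀ * W^n * ((n.factorial : ℝ))^2 := by
    intro n
    have hf1 : ((2*n+1).factorial : ℝ) ≤ 4*16^n*(n.factorial:ℝ)^2 := fact_bound n
    have hinv : (a⁻¹)^(2*n+1) ≤ A * (A^2)^n := by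
      calc (a⁻¹)^(2*n+1) ≤ A^(2*n+1) := by
            apply pow_le_pow_left₀ (by positivity) hAa
        _ = A * (A^2)^n := by rw [pow_add, pow_mul, pow_one]; ring
    have step1 : Sr * ((2*n+1).factorial:ℝ)/2^n * (a⁻¹)^(2*n+1)
        ≤ Sr * ((2*n+1).factorial:ℝ) * (a⁻¹)^(2*n+1) := by
      apply mul_le_mul_of_nonneg_right _ (by positivity)
      apply div_le_self (by positivity)
      exact one_le_pow₀ (by norm_num)
    have step2 : Sr * ((2*n+1).factorial:ℝ) * (a⁻¹)^(2*n+1)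
        ≤ Sr * (4*16^n*(n.factorial:ℝ)^2) * (A * (A^2)^n) := by
      apply mul_le_mul _ hinv (by positivity) (by positivity)
      apply mul_le_mul_of_nonneg_left hf1 hSr0
    have step3 : Sr * (4*16^n*(n.factorial:ℝ)^2) * (A * (A^2)^n)
        = (4*Sr*A) * W^n * ((n.factorial:ℝ))^2 := by
      rw [hW, mul_pow]
      ring
    have hWfac : (1:ℝ) ≤ W^n * ((n.factorial:ℝ))^2 := by
      have h1 : (1:ℝ) ≤ W^n := one_le_pow₀ hW1
      have h2 : (1:ℝ) ≤ ((n.factorial:ℝ))^2 := one_le_pow₀ (hfacge n)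
      nlinarith
    have : P n ≤ (4*Sr*A) * W^n * ((n.factorial:ℝ))^2 + 1 := by
      simp only [hP]
      have := step1.trans (step2.trans_eq step3)
      linarith
    calc P n ≤ (4*Sr*A) * W^n * ((n.factorial:ℝ))^2 + 1 := this
      _ ≤ (4*Sr*A) * W^n * ((n.factorial:ℝ))^2 + W^n * ((n.factorial:ℝ))^2 := by linarith
      _ = C₀ * W^n * ((n.factorial:ℝ))^2 := by rw [hC₀]; ring
  have hsqrtpow : ∀ (x:ℝ), 0 ≤ x → ∀ n : ℕ, Real.sqrt (x^n) = (Real.sqrt x)^n := by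
    intro x hx n
    induction n with
    | zero => simp
    | succ n ih => rw [pow_succ, pow_succ, Real.sqrt_mul (by positivity), ih]
  set M : ℝ := max (Real.sqrt W) 1 with hM
  have hM1 : (1:ℝ) ≤ M := le_max_right _ _
  have hM0 : (0:ℝ) < M := lt_of_lt_of_le one_pos hM1
  have hMW : Real.sqrt W ≤ M := le_max_left _ _
  set K : ℝ := 2*M with hK
  have hK0 : (0:ℝ) < K := by positivity
  set C : ℝ := Real.sqrt (C₀/(b-a)) + 2*M*Real.sqrt ((b-a)*C₀) with hC
  have hC0 : (0:ℝ) ≤ C := by positivity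
  refine ⟨C, K, hC0, hK0, ?_⟩
  intro n x hx
  have hnp1 : ((n:ℝ)+1) ≤ 2*2^n := by
    have := Nat.lt_two_pow_self (n := n)
    have h2 : (n:ℝ) < 2^n := by exact_mod_cast this
    have h3 : (1:ℝ) ≤ 2^n := one_le_pow₀ (by norm_num)
    linarith
  have piece1 : Real.sqrt (P n / (b - a)) ≤ Real.sqrt (C₀/(b-a)) * K^n * (n.factorial:ℝ) := by
    calc Real.sqrt (P n / (b - a))
        ≤ Real.sqrt (C₀/(b-a) * (W^n * ((n.factorial:ℝ))^2)) := by
          apply Real.sqrt_le_sqrt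
          rw [div_mul_eq_mul_div, div_le_div_iff_of_pos_right hba] -- may need fixing
          calc P n ≤ C₀ * W^n * ((n.factorial:ℝ))^2 := hPle n
            _ = C₀ * (W^n * ((n.factorial:ℝ))^2) := by ring
      _ = Real.sqrt (C₀/(b-a)) * ((Real.sqrt W)^n * (n.factorial:ℝ)) := by
          rw [Real.sqrt_mul (by positivity : (0:ℝ) ≤ C₀/(b-a)),
            Real.sqrt_mul (by positivity : (0:ℝ) ≤ W^n),
            hsqrtpow W hW0.le, Real.sqrt_sq (by positivity)]
      _ ≤ Real.sqrt (C₀/(b-a)) * (K^n * (n.factorial:ℝ)) := by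
          apply mul_le_mul_of_nonneg_left _ (Real.sqrt_nonneg _)
          apply mul_le_mul_of_nonneg_right _ (by positivity)
          apply pow_le_pow_left₀ (Real.sqrt_nonneg _)
          rw [hK]; linarith
      _ = _ := by ring
  have piece2 : Real.sqrt ((b - a) * P (n+1)) ≤ 2*M*Real.sqrt ((b-a)*C₀) * K^n * (n.factorial:ℝ) := by
    calc Real.sqrt ((b - a) * P (n+1))
        ≤ Real.sqrt ((b-a)*C₀ * (W^(n+1) * (((n+1).factorial:ℝ))^2)) := by
          apply Real.sqrt_le_sqrt
          calc (b - a) * P (n+1) ≤ (b-a) * (C₀ * W^(n+1) * (((n+1).factorial:ℝ))^2) := by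
                apply mul_le_mul_of_nonneg_left (hPle (n+1)) hba.le
            _ = (b-a)*C₀ * (W^(n+1) * (((n+1).factorial:ℝ))^2) := by ring
      _ = Real.sqrt ((b-a)*C₀) * ((Real.sqrt W)^(n+1) * ((n+1).factorial:ℝ)) := by
          rw [show (b-a)*C₀ * (W^(n+1) * (((n+1).factorial:ℝ))^2)
              = ((b-a)*C₀) * (W^(n+1) * (((n+1).factorial:ℝ))^2) from rfl,
            Real.sqrt_mul (by positivity : (0:ℝ) ≤ (b-a)*C₀),
            Real.sqrt_mul (by positivity : (0:ℝ) ≤ W^(n+1)),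
            hsqrtpow W hW0.le, Real.sqrt_sq (by positivity)]
      _ ≤ Real.sqrt ((b-a)*C₀) * (M^(n+1) * ((n+1).factorial:ℝ)) := by
          apply mul_le_mul_of_nonneg_left _ (Real.sqrt_nonneg _)
          apply mul_le_mul_of_nonneg_right _ (by positivity)
          apply pow_le_pow_left₀ (Real.sqrt_nonneg _) hMW
      _ = Real.sqrt ((b-a)*C₀) * M * (M^n * (((n:ℝ)+1) * (n.factorial:ℝ))) := by
          rw [pow_succ, Nat.factorial_succ]
          push_cast
          ring
      _ ≤ Real.sqrt ((b-a)*C₀) * M * (M^n * ((2*2^n) * (n.factorial:ℝ))) := by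
          apply mul_le_mul_of_nonneg_left _ (by positivity)
          apply mul_le_mul_of_nonneg_left _ (by positivity)
          apply mul_le_mul_of_nonneg_right hnp1 (by positivity)
      _ = 2*M*Real.sqrt ((b-a)*C₀) * ((2*M)^n * (n.factorial:ℝ)) := by
          rw [mul_pow]
          ring
      _ = _ := by rw [hK]; ring
  calc ‖iteratedDerivWithin n f (Ioi 0) x‖
      ≤ Real.sqrt (P n / (b - a)) + Real.sqrt ((b - a) * P (n+1)) := hpt n x hx
    _ ≤ Real.sqrt (C₀/(b-a)) * K^n * (n.factorial:ℝ)
        + 2*M*Real.sqrt ((b-a)*C₀) * K^n * (n.factorial:ℝ) := add_le_add piece1 piece2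
    _ = C * K^n * (n.factorial:ℝ) := by rw [hC]; ring

/-- If `f : ℝ → ℂ` is smooth on `(0,∞)` and the AHS sum is finite, then `f` is real analytic
on `(0,∞)`. -/
theorem ahs_real_analytic (f : ℝ → ℂ) (hf : ContDiffOn ℝ (⊤ : ℕ∞) f (Ioi 0))
    (hsum :
      ∑' n : ℕ, ENNReal.ofReal ((2 : ℝ) ^ n / (Nat.factorial (2 * n + 1) : ℝ)) *
        ∫⁻ x in Ioi (0 : ℝ),
          ENNReal.ofReal (x ^ (2 * n + 1)) *
            (‖iteratedDerivWithin n f (Ioi 0) x‖₊ : ℝ≥0∞) ^ 2 ∂volume < ⊤) :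
    ∀ x ∈ Ioi (0 : ℝ), AnalyticAt ℝ f x := by
  intro x hx
  have hx0 : (0:ℝ) < x := hx
  obtain ⟨C, K, hC, hK, hbd⟩ := deriv_bounds f hf hsum
    (a := x/2) (b := x+1) (by positivity) (by linarith)
  exact analyticAt_of_bounds f hf (by positivity) (by linarith) (by linarith) hC hK hbd
end

section
/- For every z in the sector Δ = {z ∈ ℂ : Re z > 0 and |Im z| < Re z}, the integral over {x ∈ (0,∞) : |z − x| < x/√2} of (x²/2 − |z − x|²)^{-1/2} dx equals √2 π. -/
open MeasureTheory Set Real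
open scoped ENNReal

/-- The open sector `Δ = {z : Re z > 0 ∧ |Im z| < Re z}`. -/
def Delta : Set ℂ := {z : ℂ | 0 < z.re ∧ |z.im| < z.re}

/-- One-dimensional change of variables for the Lebesgue integral. -/
lemma lintegral_image_eq_lintegral_abs_deriv_mul' {s : Set ℝ} {f f' : ℝ → ℝ}
    (hs : MeasurableSet s) (hf' : ∀ x ∈ s, HasDerivWithinAt f (f' x) s x)
    (hf : InjOn f s) (g : ℝ → ℝ≥0∞) :
    ∫⁻ x in f '' s, g x = ∫⁻ x in s, ENNReal.ofReal |f' x| * g (f x) := by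
  simpa only [ContinuousLinearMap.det_toSpanSingleton] using
    lintegral_image_eq_lintegral_abs_det_fderiv_mul volume hs
      (fun x hx => (hf' x hx).hasFDerivWithinAt) hf g

/-- For every `z` in the sector `Δ`, the integral of `(x²/2 - |z-x|²)^{-1/2}` over the set of
`x > 0` with `|z - x| < x/√2` equals `√2 π`. -/
theorem weight_integral_eq (z : ℂ) (hz : z ∈ Delta) :
    ∫⁻ x in {x : ℝ | 0 < x ∧ ‖z - (x : ℂ)‖ < x / Real.sqrt 2},
        ENNReal.ofReal ((Real.sqrt (x ^ 2 / 2 - ‖z - (x : ℂ)‖ ^ 2))⁻¹) ∂volume =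
      ENNReal.ofReal (Real.sqrt 2 * Real.pi) := by
  obtain ⟨ha, hba⟩ := hz
  set a := z.re with ha_def
  set b := z.im with hb_def
  have hb2 : b ^ 2 < a ^ 2 := by
    have := abs_lt.mp hba
    nlinarith [this.1, this.2]
  set r : ℝ := Real.sqrt (2 * (a ^ 2 - b ^ 2)) with hr_def
  have hr2 : r ^ 2 = 2 * (a ^ 2 - b ^ 2) := Real.sq_sqrt (by nlinarith)
  have hrpos : 0 < r := Real.sqrt_pos.2 (by nlinarith)
  have hr2a : r < 2 * a := by nlinarith
  have habs : ∀ x : ℝ, ‖z - (x : ℂ)‖ ^ 2 = (a - x) ^ 2 + b ^ 2 := by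
    intro x
    rw [Complex.sq_norm, Complex.normSq_apply]
    simp [Complex.sub_re, Complex.sub_im]
    ring
  -- The integration set is the interval `(2a - r, 2a + r)`.
  have hset : {x : ℝ | 0 < x ∧ ‖z - (x : ℂ)‖ < x / Real.sqrt 2}
      = Ioo (2 * a - r) (2 * a + r) := by
    ext x
    simp only [mem_setOf_eq, mem_Ioo]
    constructor
    · rintro ⟨hx, hlt⟩
      have h1 : ‖z - (x : ℂ)‖ ^ 2 < (x / Real.sqrt 2) ^ 2 :=
        pow_lt_pow_left₀ hlt (norm_nonneg _) two_ne_zero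
      rw [habs, div_pow, Real.sq_sqrt (by norm_num : (0:ℝ) ≤ 2)] at h1
      constructor <;> nlinarith [sq_nonneg (x - 2 * a + r), sq_nonneg (x - 2 * a - r)]
    · rintro ⟨h1, h2⟩
      have hx : 0 < x := by nlinarith
      refine ⟨hx, ?_⟩
      have hsq : ‖z - (x : ℂ)‖ ^ 2 < (x / Real.sqrt 2) ^ 2 := by
        rw [habs, div_pow, Real.sq_sqrt (by norm_num : (0:ℝ) ≤ 2)]
        nlinarith
      exact lt_of_pow_lt_pow_left₀ 2 (by positivity) hsq
  -- Substitute `x = 2a + r sin θ`.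
  set f : ℝ → ℝ := fun θ => 2 * a + r * Real.sin θ with hf_def
  set s : Set ℝ := Ioo (-(π / 2)) (π / 2) with hs_def
  have hderiv : ∀ θ ∈ s, HasDerivWithinAt f (r * Real.cos θ) s θ := fun θ _ =>
    (((Real.hasDerivAt_sin θ).const_mul r).const_add (2 * a)).hasDerivWithinAt
  have hinj : InjOn f s := by
    intro x hx y hy hxy
    have hsub : s ⊆ Icc (-(π / 2)) (π / 2) := Ioo_subset_Icc_self
    have : Real.sin x = Real.sin y := by
      have := hxy
      simp only [hf_def] at this
      have h := add_left_cancel this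
      exact mul_left_cancel₀ (ne_of_gt hrpos) h
    exact Real.injOn_sin (hsub hx) (hsub hy) this
  have himg : f '' s = Ioo (2 * a - r) (2 * a + r) := by
    apply Subset.antisymm
    · rintro _ ⟨θ, hθ, rfl⟩
      have hmem : θ ∈ Icc (-(π / 2)) (π / 2) := Ioo_subset_Icc_self hθ
      have h1 : Real.sin θ < 1 := by
        have := Real.strictMonoOn_sin hmem (right_mem_Icc.2 (by linarith [pi_pos])) hθ.2
        simpa using this
      have h2 : -1 < Real.sin θ := by
        have := Real.strictMonoOn_sin (left_mem_Icc.2 (by linarith [pi_pos])) hmem hθ.1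
        simpa using this
      constructor <;> simp only [hf_def] <;> nlinarith
    · intro x hx
      have hcont : ContinuousOn f (Icc (-(π / 2)) (π / 2)) :=
        (continuous_const.add (continuous_const.mul Real.continuous_sin)).continuousOn
      have hle : -(π / 2) ≤ π / 2 := by linarith [pi_pos]
      have := intermediate_value_Ioo hle hcont
      apply this
      simp only [hf_def, Real.sin_neg, Real.sin_pi_div_two]
      constructor <;> simp only [mem_Ioo] at hx <;> [linarith [hx.1]; linarith [hx.2]]
  rw [hset, ← himg,
    lintegral_image_eq_lintegral_abs_deriv_mul' measurableSet_Ioo hderiv hinj]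
  -- After substitution the integrand is the constant `√2`.
  have hptwise : ∀ θ ∈ s,
      ENNReal.ofReal |r * Real.cos θ| *
        ENNReal.ofReal ((Real.sqrt ((f θ) ^ 2 / 2 - ‖z - ((f θ : ℝ) : ℂ)‖ ^ 2))⁻¹)
      = ENNReal.ofReal (Real.sqrt 2) := by
    intro θ hθ
    have hc : 0 < Real.cos θ := Real.cos_pos_of_mem_Ioo hθ
    have hsc := Real.sin_sq_add_cos_sq θ
    have hE : (f θ) ^ 2 / 2 - ((a - f θ) ^ 2 + b ^ 2) = (r * Real.cos θ) ^ 2 / 2 := by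
      simp only [hf_def]
      linear_combination (-1/2 : ℝ) * hr2 + (-(r^2)/2) * hsc
    have hrc : 0 < r * Real.cos θ := mul_pos hrpos hc
    have hsqrt : Real.sqrt ((r * Real.cos θ) ^ 2 / 2) = r * Real.cos θ / Real.sqrt 2 := by
      rw [show (r * Real.cos θ) ^ 2 / 2 = (r * Real.cos θ / Real.sqrt 2) ^ 2 by
        rw [div_pow, Real.sq_sqrt (by norm_num : (0:ℝ) ≤ 2)]]
      exact Real.sqrt_sq (by positivity)
    rw [habs, hE, hsqrt, ← ENNReal.ofReal_mul (abs_nonneg _)]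
    congr 1
    rw [abs_of_pos hrc]
    have hs2 : (0:ℝ) < Real.sqrt 2 := Real.sqrt_pos.2 (by norm_num)
    field_simp
  rw [setLIntegral_congr_fun measurableSet_Ioo hptwise]
  rw [setLIntegral_const, Real.volume_Ioo]
  rw [show π / 2 - -(π / 2) = π by ring, ← ENNReal.ofReal_mul (Real.sqrt_nonneg 2)]
end

section
/- Let z₀ = 1/2 + i/(2√2) and let Ω = ⋃_{0<x≤1/2} B(x, x/√2) ∪ ⋃_{1/2<x<1} B(x, (1−x)/√2) ⊂ ℂ. Then ∫_Ω |z₀ − z|^{-2} dA(z) = ∞; that is, the function f(z) = 1/(z₀ − z), which is holomorphic on Ω, does not belong to the Bergman space A²(Ω). -/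
open MeasureTheory Set Metric
open scoped ENNReal NNReal

/-- The domain `Ω = ⋃_{0<x≤1/2} B(x, x/√2) ∪ ⋃_{1/2<x<1} B(x, (1-x)/√2)`. -/
noncomputable def Omega : Set ℂ :=
  (⋃ x ∈ Ioc (0 : ℝ) (1 / 2), ball (x : ℂ) (x / Real.sqrt 2)) ∪
    ⋃ x ∈ Ioo (1 / 2 : ℝ) 1, ball (x : ℂ) ((1 - x) / Real.sqrt 2)

/-- The radius `1/(2√2)`. -/
noncomputable def rr : ℝ := (2 * Real.sqrt 2)⁻¹

lemma rr_pos : 0 < rr := by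
  have : (0:ℝ) < Real.sqrt 2 := Real.sqrt_pos.mpr (by norm_num)
  rw [rr]; positivity

lemma rr_sq : rr ^ 2 = 1 / 8 := by
  have h : Real.sqrt 2 ^ 2 = 2 := Real.sq_sqrt (by norm_num)
  rw [rr, inv_pow, mul_pow, h]; norm_num

/-- Horizontal strips accumulating at `z₀`. -/
noncomputable def SS (n : ℕ) : Set ℂ :=
  Complex.measurableEquivRealProd ⁻¹'
    (Ioo (1/2 - rr/2^(n+1)) (1/2 + rr/2^(n+1)) ×ˢ Ioo (rr - rr/2^n) (rr - rr/2^(n+1)))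

lemma mem_SS {n : ℕ} {z : ℂ} :
    z ∈ SS n ↔ (1/2 - rr/2^(n+1) < z.re ∧ z.re < 1/2 + rr/2^(n+1)) ∧
      (rr - rr/2^n < z.im ∧ z.im < rr - rr/2^(n+1)) := by
  simp [SS, Complex.measurableEquivRealProd_apply, mem_Ioo]

lemma SS_measurable (n : ℕ) : MeasurableSet (SS n) :=
  (measurableSet_Ioo.prod measurableSet_Ioo).preimage
    Complex.measurableEquivRealProd.measurable

lemma two_pow_succ_eq (n : ℕ) : (2:ℝ)^(n+1) = 2 * 2^n := by rw [pow_succ]; ring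

lemma four_pow_succ_eq (n : ℕ) : (4:ℝ)^(n+1) = 4 * (2^n)^2 := by
  rw [pow_succ, ← pow_mul, mul_comm n 2, pow_mul]; norm_num; ring

lemma SS_volume (n : ℕ) :
    volume (SS n) = ENNReal.ofReal (rr/2^n) * ENNReal.ofReal (rr/2^(n+1)) := by
  rw [SS, Complex.volume_preserving_equiv_real_prod.measure_preimage
    (measurableSet_Ioo.prod measurableSet_Ioo).nullMeasurableSet]
  rw [Measure.volume_eq_prod, Measure.prod_prod, Real.volume_Ioo, Real.volume_Ioo]
  have hp : (0:ℝ) < 2^n := by positivity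
  congr 1
  · congr 1; rw [two_pow_succ_eq]; field_simp; ring
  · congr 1; rw [two_pow_succ_eq]; field_simp; ring

lemma SS_subset_Omega (n : ℕ) : SS n ⊆ Omega := by
  intro z hz
  rw [mem_SS] at hz
  obtain ⟨⟨h1, h2⟩, h3, h4⟩ := hz
  have hp : (0:ℝ) < 2^n := by positivity
  have hrr := rr_pos
  set t : ℝ := rr / 2^(n+1) with hts
  have htp : 0 < t := by rw [hts]; positivity
  have h2t : rr / 2^n = 2 * t := by
    rw [hts, two_pow_succ_eq]; field_simp
  have ht2 : t ≤ rr / 2 := by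
    rw [hts]
    apply div_le_div_of_nonneg_left hrr.le (by norm_num)
    calc (2:ℝ) = 2^1 := (pow_one 2).symm
    _ ≤ 2^(n+1) := pow_le_pow_right₀ (by norm_num) (by omega)
  rw [h2t] at h3
  have hball : z ∈ ball (((1:ℝ)/2 : ℝ) : ℂ) ((1/2 : ℝ) / Real.sqrt 2) := by
    have hrad : ((1:ℝ)/2) / Real.sqrt 2 = rr := by
      rw [div_div, one_div, rr]
    rw [mem_ball, Complex.dist_eq, hrad]
    have habs : ‖z - ((1:ℝ)/2 : ℝ)‖ ^ 2 < rr ^ 2 := by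
      rw [Complex.sq_norm, Complex.normSq_apply]
      simp only [Complex.sub_re, Complex.sub_im, Complex.ofReal_re, Complex.ofReal_im]
      have him0 : 0 ≤ rr - 2 * t := by linarith
      nlinarith [mul_pos (show (0:ℝ) < t - (z.re - 1/2) by linarith)
          (show (0:ℝ) < t + (z.re - 1/2) by linarith),
        mul_pos (show (0:ℝ) < rr - t - z.im + (2 * t) by linarith)
          (show (0:ℝ) < rr - t + z.im by linarith),
        mul_pos htp (show (0:ℝ) < rr - t by linarith)]
    exact lt_of_pow_lt_pow_left₀ 2 hrr.le habs
  left
  exact mem_biUnion (show (1:ℝ)/2 ∈ Ioc (0:ℝ) (1/2) by constructor <;> norm_num) hball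

lemma z0_eq : (1 / 2 + Complex.I / (2 * (Real.sqrt 2 : ℂ))) =
    Complex.ofReal (1/2) + Complex.ofReal rr * Complex.I := by
  have h : (Real.sqrt 2 : ℂ) ≠ 0 := by
    have : (0:ℝ) < Real.sqrt 2 := Real.sqrt_pos.mpr (by norm_num)
    exact_mod_cast ne_of_gt this
  rw [rr]
  push_cast
  field_simp

/-- The function `z ↦ 1/(z₀ - z)` with `z₀ = 1/2 + i/(2√2)` is not square integrable on `Ω`. -/
theorem not_in_bergman_Omega :
    ∫⁻ z in Omega,
        (‖((1 / 2 + Complex.I / (2 * (Real.sqrt 2 : ℂ))) - z)⁻¹‖₊ : ℝ≥0∞) ^ 2 ∂volume = ⊤ := by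
  set z₀ : ℂ := 1 / 2 + Complex.I / (2 * (Real.sqrt 2 : ℂ)) with hz₀
  set f : ℂ → ℝ≥0∞ := fun z => (‖(z₀ - z)⁻¹‖₊ : ℝ≥0∞) ^ 2 with hf
  have hfm : Measurable f := by
    apply Measurable.pow_const
    exact (measurable_const.sub measurable_id).inv.nnnorm.coe_nnreal_ennreal
  -- pointwise lower bound on each strip
  have hlow : ∀ n : ℕ, ∀ z ∈ SS n, ENNReal.ofReal ((4:ℝ)^(n+1)) ≤ f z := by
    intro n z hz
    rw [mem_SS] at hz
    obtain ⟨⟨h1, h2⟩, h3, h4⟩ := hz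
    have hp : (0:ℝ) < 2^n := by positivity
    have hrr := rr_pos
    set t : ℝ := rr / 2^(n+1) with hts
    have htp : 0 < t := by rw [hts]; positivity
    have h2t : rr / 2^n = 2 * t := by
      rw [hts, two_pow_succ_eq]; field_simp
    rw [h2t] at h3
    have hre : (z₀ - z).re = 1/2 - z.re := by
      rw [hz₀, z0_eq]; simp
    have him : (z₀ - z).im = rr - z.im := by
      rw [hz₀, z0_eq]; simp
    have himpos : 0 < (z₀ - z).im := by rw [him]; linarith
    have hwne : z₀ - z ≠ 0 := fun h => by simp [h] at himpos
    have hkey : (2^n:ℝ)^2 * t^2 = 1/32 := by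
      have : t = rr / (2 * 2^n) := by rw [hts, two_pow_succ_eq]
      rw [this, div_pow]
      have h8 := rr_sq
      field_simp
      linear_combination 32 * h8
    have hnormsq : ‖z₀ - z‖ ^ 2 < ((4:ℝ)^(n+1))⁻¹ := by
      rw [Complex.sq_norm, Complex.normSq_apply, hre, him, four_pow_succ_eq,
        inv_eq_one_div, lt_div_iff₀ (by positivity)]
      nlinarith [mul_pos (show (0:ℝ) < t - (1/2 - z.re) by linarith)
          (show (0:ℝ) < t + (1/2 - z.re) by linarith),
        mul_pos (show (0:ℝ) < 2*t - (rr - z.im) by linarith)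
          (show (0:ℝ) < 2*t + (rr - z.im) by linarith),
        sq_nonneg ((2:ℝ)^n), hkey]
    have habs2 : 0 < ‖z₀ - z‖ ^ 2 := pow_pos (norm_pos_iff.mpr hwne) 2
    have hreal : (4:ℝ)^(n+1) ≤ ‖(z₀ - z)⁻¹‖ ^ 2 := by
      rw [norm_inv, inv_pow]
      calc (4:ℝ)^(n+1) = (((4:ℝ)^(n+1))⁻¹)⁻¹ := (inv_inv _).symm
      _ ≤ (‖z₀ - z‖ ^ 2)⁻¹ := by
          apply inv_anti₀ habs2 hnormsq.le
    calc ENNReal.ofReal ((4:ℝ)^(n+1)) ≤ ENNReal.ofReal (‖(z₀ - z)⁻¹‖ ^ 2) :=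
        ENNReal.ofReal_le_ofReal hreal
    _ = f z := by
        rw [hf, ENNReal.ofReal_pow (norm_nonneg _), ofReal_norm, enorm_eq_nnnorm]
  -- each strip contributes at least 1/4
  have hstrip : ∀ n : ℕ, ENNReal.ofReal (1/4 : ℝ) ≤ ∫⁻ z in SS n, f z ∂volume := by
    intro n
    have h1 : ∫⁻ _ in SS n, ENNReal.ofReal ((4:ℝ)^(n+1)) ∂volume ≤ ∫⁻ z in SS n, f z ∂volume :=
      setLIntegral_mono hfm (hlow n)
    rw [setLIntegral_const, SS_volume] at h1
    refine le_trans (le_of_eq ?_) h1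
    have hp : (0:ℝ) < 2^n := by positivity
    have hrr := rr_pos
    rw [← ENNReal.ofReal_mul (by positivity), ← ENNReal.ofReal_mul (by positivity)]
    congr 1
    have : (4:ℝ)^(n+1) * (rr/2^n) * (rr/2^(n+1)) = 2 * rr^2 := by
      rw [four_pow_succ_eq, two_pow_succ_eq]; field_simp; ring
    rw [mul_assoc] at this
    rw [this, rr_sq]; norm_num
  -- strips are pairwise disjoint
  have hdisj : Pairwise (Function.onFun Disjoint SS) := by
    have key : ∀ m k : ℕ, m < k → Disjoint (SS m) (SS k) := by
      intro m k h
      rw [Set.disjoint_left]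
      intro z hm hk
      rw [mem_SS] at hm hk
      have h1 : z.im < rr - rr/2^(m+1) := hm.2.2
      have h2 : rr - rr/2^k < z.im := hk.2.1
      have : rr/2^k ≤ rr/2^(m+1) := by
        apply div_le_div_of_nonneg_left rr_pos.le (by positivity)
        exact pow_le_pow_right₀ (by norm_num) h
      linarith
    intro m k hmk
    rcases hmk.lt_or_gt with h | h
    · exact key m k h
    · exact (key k m h).symm
  rw [eq_top_iff]
  calc (⊤ : ℝ≥0∞) = ∑' _ : ℕ, ENNReal.ofReal (1/4 : ℝ) :=
      (ENNReal.tsum_const_eq_top_of_ne_zero (by norm_num)).symm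
  _ ≤ ∑' n : ℕ, ∫⁻ z in SS n, f z ∂volume := ENNReal.tsum_le_tsum hstrip
  _ = ∫⁻ z in ⋃ n, SS n, f z ∂volume := (lintegral_iUnion SS_measurable hdisj f).symm
  _ ≤ ∫⁻ z in Omega, f z ∂volume := lintegral_mono_set (iUnion_subset SS_subset_Omega)
end

section
/- Let z₀ = 1/2 + i/(2√2). Then ∑_{n=0}^∞ (2^n/(2n+1)!) ∫_0^{1/2} x^{2n+1} ( |n!/(z₀ − x)^{n+1}|² + |n!/(z₀ − (1−x))^{n+1}|² ) dx < ∞. (Equivalently: for the function f(z) = 1/(z₀ − z), whose n-th complex derivative is f^{(n)}(z) = n!/(z₀ − z)^{n+1}, the (AHS)-type sum ∑_{n=0}^∞ (2^n/(2n+1)!) ∫_0^{1/2} x^{2n+1} (|f^{(n)}(x)|² + |f^{(n)}(1−x)|²) dx is finite.) -/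
open MeasureTheory Set
open scoped ENNReal NNReal

private lemma ahs_normSq_eq (y : ℝ) :
    Complex.normSq ((1/2 + Complex.I / (2 * (Real.sqrt 2 : ℂ))) - (y:ℂ)) = (1/2 - y)^2 + 1/8 := by
  have h2 : Real.sqrt 2 ^ 2 = 2 := Real.sq_sqrt (by norm_num)
  have hne : (Real.sqrt 2 : ℝ) ≠ 0 := by positivity
  simp [Complex.normSq_apply, Complex.div_re, Complex.div_im]
  field_simp
  nlinarith [h2]

private lemma ahs_norm_sq_eq (n : ℕ) (y : ℝ) :
    ‖(Nat.factorial n : ℂ) / ((1/2 + Complex.I / (2 * (Real.sqrt 2 : ℂ))) - (y:ℂ)) ^ (n+1)‖^2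
      = (Nat.factorial n : ℝ)^2 / ((1/2 - y)^2 + 1/8)^(n+1) := by
  have hw : ‖(1/2 + Complex.I / (2 * (Real.sqrt 2 : ℂ))) - (y:ℂ)‖^2 = (1/2 - y)^2 + 1/8 := by
    rw [Complex.sq_norm, ahs_normSq_eq]
  rw [norm_div, norm_pow, div_pow, ← pow_mul, mul_comm (n+1) 2, pow_mul, hw]
  norm_num [Complex.norm_natCast]

private lemma ahs_core_ineq (n : ℕ) (x : ℝ) (h0 : 0 < x) (h1 : x < 1/2) :
    x^(2*n+1) / ((1/2 - x)^2 + 1/8)^(n+1) ≤ 4 * (1+2*x)^n := by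
  have hDpos : (0:ℝ) < (1/2 - x)^2 + 1/8 := by positivity
  rw [div_le_iff₀ (by positivity)]
  have hx2 : x^2 ≤ (1+2*x) * ((1/2 - x)^2 + 1/8) := by
    have h1' : (0:ℝ) ≤ 1/2 - x := by linarith
    have h2' : (0:ℝ) ≤ 3/4 + x - 2*x^2 := by nlinarith
    nlinarith [mul_nonneg h1' h2']
  have hxD : x ≤ 4 * ((1/2 - x)^2 + 1/8) := by nlinarith [sq_nonneg (1/2 - x)]
  calc x^(2*n+1) = (x^2)^n * x := by rw [← pow_mul]; ring
    _ ≤ ((1+2*x)*((1/2 - x)^2 + 1/8))^n * (4*((1/2 - x)^2 + 1/8)) := by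
        apply mul_le_mul (pow_le_pow_left₀ (by positivity) hx2 n) hxD h0.le (by positivity)
    _ = 4 * (1+2*x)^n * ((1/2 - x)^2 + 1/8)^(n+1) := by rw [mul_pow]; ring

private lemma ahs_integral_eq (n : ℕ) :
    ∫ x in (0:ℝ)..(1/2), (1+2*x)^n = ((2:ℝ)^(n+1) - 1)/(2*((n:ℝ)+1)) := by
  have hderiv : ∀ x : ℝ,
      HasDerivAt (fun y : ℝ => (1+2*y)^(n+1)/(2*((n:ℝ)+1))) ((1+2*x)^n) x := by
    intro x
    have h1 : HasDerivAt (fun y : ℝ => 1+2*y) 2 x := by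
      simpa using ((hasDerivAt_id x).const_mul 2).const_add 1
    have h2 := (h1.pow (n+1)).div_const (2*((n:ℝ)+1))
    simp only [Nat.add_sub_cancel, Nat.cast_add, Nat.cast_one] at h2
    convert h2 using 1
    · rfl
    · rfl
    · rfl
    field_simp
  rw [intervalIntegral.integral_eq_sub_of_hasDerivAt (fun x _ => hderiv x) (by
      apply Continuous.intervalIntegrable; continuity)]
  have hne : (2*((n:ℝ)+1)) ≠ 0 := by positivity
  norm_num
  field_simp

private lemma ahs_fact_ineq : ∀ n : ℕ, 1 ≤ n →
    (16:ℝ)^n * (Nat.factorial n : ℝ)^4 ≤ 4*n*((Nat.factorial (2*n)) : ℝ)^2 := by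
  intro n hn
  induction n with
  | zero => omega
  | succ n ih =>
    rcases Nat.eq_or_lt_of_le hn with h|h
    · simp [← h]; norm_num [Nat.factorial]
    · have hn1 : 1 ≤ n := by omega
      have ih := ih hn1
      have e1 : ((Nat.factorial (n+1)) : ℝ) = (n+1) * (Nat.factorial n) := by
        push_cast [Nat.factorial_succ]; ring
      have e2 : ((Nat.factorial (2*(n+1))) : ℝ)
          = (2*n+2)*((2*n+1)*((Nat.factorial (2*n)) : ℝ)) := by
        have : 2*(n+1) = (2*n+1)+1 := by ring
        rw [this, Nat.factorial_succ, Nat.factorial_succ]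
        push_cast; ring
      rw [e1, e2]
      have hF : (0:ℝ) ≤ ((Nat.factorial (2*n)) : ℝ)^2 := sq_nonneg _
      have key : (0:ℝ) ≤ ((Nat.factorial (2*n)) : ℝ)^2 *
          (16*((n:ℝ)+1)^3*(2*n+1)^2 - 64*n*((n:ℝ)+1)^4) := by
        apply mul_nonneg hF
        nlinarith [sq_nonneg ((n:ℝ)+1)]
      have step : (16:ℝ)^(n+1)*((n:ℝ)+1)^4*((Nat.factorial n) : ℝ)^4
          ≤ 16*((n:ℝ)+1)^4 * (4*n*((Nat.factorial (2*n)) : ℝ)^2) := by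
        have := mul_le_mul_of_nonneg_left ih (by positivity : (0:ℝ) ≤ 16*((n:ℝ)+1)^4)
        calc (16:ℝ)^(n+1)*((n:ℝ)+1)^4*((Nat.factorial n) : ℝ)^4
            = 16*((n:ℝ)+1)^4 * ((16:ℝ)^n * ((Nat.factorial n) : ℝ)^4) := by ring
          _ ≤ _ := this
      push_cast
      nlinarith [step, key]

private noncomputable def ahsC (n : ℕ) : ℝ :=
  8 * ((4:ℝ)^n * ((Nat.factorial n) : ℝ)^2 /
    (((n:ℝ)+1) * ((Nat.factorial (2*n+1)) : ℝ)))

private lemma ahsC_le (n : ℕ) (hn : 1 ≤ n) : ahsC n ≤ 8 * (((n:ℝ)) ^ ((3:ℝ)/2))⁻¹ := by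
  have hnp : (0:ℝ) < n := by exact_mod_cast hn
  have hb : (0:ℝ) ≤ (4:ℝ)^n * ((Nat.factorial n) : ℝ)^2 /
      (((n:ℝ)+1) * ((Nat.factorial (2*n+1)) : ℝ)) := by positivity
  refine mul_le_mul_of_nonneg_left ?_ (by norm_num)
  set b : ℝ := (4:ℝ)^n * ((Nat.factorial n) : ℝ)^2 /
      (((n:ℝ)+1) * ((Nat.factorial (2*n+1)) : ℝ)) with hbdef
  have hsq : b^2 ≤ (((n:ℝ)) ^ ((3:ℝ)/2))⁻¹^2 := by
    have hrp : (((n:ℝ)) ^ ((3:ℝ)/2))⁻¹^2 = ((n:ℝ)^3)⁻¹ := by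
      rw [inv_pow, ← Real.rpow_natCast ((n:ℝ) ^ ((3:ℝ)/2)) 2, ← Real.rpow_mul hnp.le,
        ← Real.rpow_natCast (n:ℝ) 3]
      norm_num
    rw [hrp, hbdef, div_pow]
    have hden : (0:ℝ) < (((n:ℝ)+1) * ((Nat.factorial (2*n+1)) : ℝ))^2 := by positivity
    rw [div_le_iff₀ hden]
    have hfs : ((Nat.factorial (2*n+1)) : ℝ) = (2*n+1) * ((Nat.factorial (2*n)) : ℝ) := by
      rw [Nat.factorial_succ]; push_cast; ring
    have h44 : (16:ℝ)^n = 4^n * 4^n := by rw [← mul_pow]; norm_num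
    have h16 : ((4:ℝ)^n * ((Nat.factorial n) : ℝ)^2)^2
        = (16:ℝ)^n * ((Nat.factorial n) : ℝ)^4 := by rw [h44]; ring
    rw [h16, hfs]
    have key := ahs_fact_ineq n hn
    have h4a : 2*(n:ℝ)^2 ≤ ((n:ℝ)+1)*(2*n+1) := by nlinarith [hnp]
    have h4 : 4*(n:ℝ)^4 ≤ (((n:ℝ)+1)*(2*n+1))^2 := by
      nlinarith [h4a, hnp, sq_nonneg ((n:ℝ)+1)]
    calc (16:ℝ)^n * ((Nat.factorial n) : ℝ)^4
        ≤ 4*n*((Nat.factorial (2*n)) : ℝ)^2 := key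
      _ = (4*(n:ℝ)) * ((Nat.factorial (2*n)) : ℝ)^2 := by ring
      _ ≤ (((n:ℝ)+1)*(2*n+1))^2 / (n:ℝ)^3 * ((Nat.factorial (2*n)) : ℝ)^2 := by
          apply mul_le_mul_of_nonneg_right _ (sq_nonneg _)
          rw [le_div_iff₀ (by positivity)]
          nlinarith [h4]
      _ = ((n:ℝ)^3)⁻¹ * ((((n:ℝ)+1) * ((2*n+1) * ((Nat.factorial (2*n)) : ℝ)))^2) := by
          field_simp
  have hc : (0:ℝ) ≤ (((n:ℝ)) ^ ((3:ℝ)/2))⁻¹ := by positivity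
  calc b = Real.sqrt (b^2) := (Real.sqrt_sq hb).symm
    _ ≤ Real.sqrt ((((n:ℝ)) ^ ((3:ℝ)/2))⁻¹^2) := Real.sqrt_le_sqrt hsq
    _ = (((n:ℝ)) ^ ((3:ℝ)/2))⁻¹ := Real.sqrt_sq hc

private lemma ahsC_summable : Summable ahsC := by
  rw [← summable_nat_add_iff 1]
  have hg : Summable (fun n : ℕ => 8 * (((n:ℝ)) ^ ((3:ℝ)/2))⁻¹) :=
    Summable.mul_left _ (Real.summable_nat_rpow_inv.mpr (by norm_num))
  have hg1 : Summable (fun n : ℕ => 8 * ((((n+1):ℕ):ℝ) ^ ((3:ℝ)/2))⁻¹) :=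
    (summable_nat_add_iff 1).mpr hg
  apply Summable.of_nonneg_of_le _ _ hg1
  · intro n
    unfold ahsC; positivity
  · intro n
    exact ahsC_le (n+1) (by omega)

/-- The (AHS)-type sum on the two half-diagonals for the function `f(z) = 1/(z₀ - z)`,
`z₀ = 1/2 + i/(2√2)`, whose `n`-th derivative is `n!/(z₀ - z)^{n+1}`, is finite. -/
theorem ahs_sum_finite_for_pole :
    ∑' n : ℕ, ENNReal.ofReal ((2 : ℝ) ^ n / (Nat.factorial (2 * n + 1) : ℝ)) *
        ∫⁻ x in Ioo (0 : ℝ) (1 / 2),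
          ENNReal.ofReal (x ^ (2 * n + 1)) *
            ((‖(Nat.factorial n : ℂ) /
                ((1 / 2 + Complex.I / (2 * (Real.sqrt 2 : ℂ))) - (x : ℂ)) ^ (n + 1)‖₊ : ℝ≥0∞) ^ 2 +
              (‖(Nat.factorial n : ℂ) /
                ((1 / 2 + Complex.I / (2 * (Real.sqrt 2 : ℂ))) - (1 - (x : ℂ))) ^ (n + 1)‖₊ : ℝ≥0∞) ^ 2)
          ∂volume < ⊤ := by
  have hterm : ∀ n : ℕ,
      ENNReal.ofReal ((2 : ℝ) ^ n / (Nat.factorial (2 * n + 1) : ℝ)) *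
        (∫⁻ x in Ioo (0 : ℝ) (1 / 2),
          ENNReal.ofReal (x ^ (2 * n + 1)) *
            ((‖(Nat.factorial n : ℂ) /
                ((1 / 2 + Complex.I / (2 * (Real.sqrt 2 : ℂ))) - (x : ℂ)) ^ (n + 1)‖₊ : ℝ≥0∞) ^ 2 +
              (‖(Nat.factorial n : ℂ) /
                ((1 / 2 + Complex.I / (2 * (Real.sqrt 2 : ℂ))) - (1 - (x : ℂ))) ^ (n + 1)‖₊ : ℝ≥0∞) ^ 2)
          ∂volume) ≤ ENNReal.ofReal (ahsC n) := by
    intro n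
    set F : ℝ := ((Nat.factorial n) : ℝ) with hF
    -- the bounding function
    set g : ℝ → ℝ := fun x => 8 * F^2 * (1+2*x)^n with hg
    have hgmeas : Measurable fun x => ENNReal.ofReal (g x) := by
      apply Measurable.ennreal_ofReal; fun_prop
    have hstep1 : (∫⁻ x in Ioo (0 : ℝ) (1 / 2),
          ENNReal.ofReal (x ^ (2 * n + 1)) *
            ((‖(Nat.factorial n : ℂ) /
                ((1 / 2 + Complex.I / (2 * (Real.sqrt 2 : ℂ))) - (x : ℂ)) ^ (n + 1)‖₊ : ℝ≥0∞) ^ 2 +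
              (‖(Nat.factorial n : ℂ) /
                ((1 / 2 + Complex.I / (2 * (Real.sqrt 2 : ℂ))) - (1 - (x : ℂ))) ^ (n + 1)‖₊ : ℝ≥0∞) ^ 2)
          ∂volume)
        ≤ ∫⁻ x in Ioo (0 : ℝ) (1 / 2), ENNReal.ofReal (g x) ∂volume := by
      apply setLIntegral_mono hgmeas
      intro x hx
      obtain ⟨hx0, hx12⟩ := hx
      have hnn : ∀ z : ℂ, ((‖z‖₊ : ℝ≥0∞))^2 = ENNReal.ofReal (‖z‖^2) := fun z => by
        rw [ENNReal.ofReal_pow (norm_nonneg _), ← coe_nnnorm, ENNReal.ofReal_coe_nnreal]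
      rw [hnn, hnn, ← ENNReal.ofReal_add (sq_nonneg _) (sq_nonneg _),
        ← ENNReal.ofReal_mul (by positivity)]
      apply ENNReal.ofReal_le_ofReal
      have hA := ahs_norm_sq_eq n x
      have hcast : (1 - (x:ℂ)) = (((1 - x : ℝ)) : ℂ) := by push_cast; ring
      have hB : ‖(Nat.factorial n : ℂ) /
          ((1 / 2 + Complex.I / (2 * (Real.sqrt 2 : ℂ))) - (1 - (x : ℂ))) ^ (n + 1)‖^2
          = F^2 / ((1/2 - x)^2 + 1/8)^(n+1) := by
        rw [hcast, ahs_norm_sq_eq]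
        have : (1/2 - (1-x))^2 + 1/8 = (1/2 - x)^2 + 1/8 := by ring
        rw [this]
      rw [hA, hB]
      have hcore := ahs_core_ineq n x hx0 hx12
      have hexp : x ^ (2*n+1) * (F^2 / ((1/2 - x)^2 + 1/8)^(n+1)
            + F^2 / ((1/2 - x)^2 + 1/8)^(n+1))
          = 2*F^2 * (x^(2*n+1) / ((1/2 - x)^2 + 1/8)^(n+1)) := by ring
      rw [hexp, hg]
      calc 2*F^2 * (x^(2*n+1) / ((1/2 - x)^2 + 1/8)^(n+1))
          ≤ 2*F^2 * (4 * (1+2*x)^n) := by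
            apply mul_le_mul_of_nonneg_left hcore (by positivity)
        _ = 8 * F^2 * (1+2*x)^n := by ring
    have hint : IntegrableOn g (Ioo (0:ℝ) (1/2)) volume := by
      have : Continuous g := by fun_prop
      exact (this.integrableOn_Icc).mono_set Ioo_subset_Icc_self
    have hnng : 0 ≤ᵐ[volume.restrict (Ioo (0:ℝ) (1/2))] g := by
      apply ae_restrict_of_forall_mem measurableSet_Ioo
      intro x hx
      have : (0:ℝ) < 1 + 2*x := by have := hx.1; linarith
      positivity
    have hstep2 : (∫⁻ x in Ioo (0 : ℝ) (1 / 2), ENNReal.ofReal (g x) ∂volume)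
        = ENNReal.ofReal (∫ x in Ioo (0:ℝ) (1/2), g x ∂volume) :=
      (MeasureTheory.ofReal_integral_eq_lintegral_ofReal hint hnng).symm
    have hval : (∫ x in Ioo (0:ℝ) (1/2), g x ∂volume)
        = 8 * F^2 * (((2:ℝ)^(n+1) - 1)/(2*((n:ℝ)+1))) := by
      rw [← integral_Ioc_eq_integral_Ioo,
        ← intervalIntegral.integral_of_le (by norm_num : (0:ℝ) ≤ 1/2)]
      rw [hg]
      simp only []
      rw [intervalIntegral.integral_const_mul, ahs_integral_eq]
    calc ENNReal.ofReal ((2 : ℝ) ^ n / (Nat.factorial (2 * n + 1) : ℝ)) * _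
        ≤ ENNReal.ofReal ((2 : ℝ) ^ n / (Nat.factorial (2 * n + 1) : ℝ)) *
            ENNReal.ofReal (8 * F^2 * (((2:ℝ)^(n+1) - 1)/(2*((n:ℝ)+1)))) := by
          apply mul_le_mul_right
          rw [← hval, ← hstep2]
          exact hstep1
      _ = ENNReal.ofReal ((2 : ℝ) ^ n / (Nat.factorial (2 * n + 1) : ℝ) *
            (8 * F^2 * (((2:ℝ)^(n+1) - 1)/(2*((n:ℝ)+1))))) := by
          rw [← ENNReal.ofReal_mul (by positivity)]
      _ ≤ ENNReal.ofReal (ahsC n) := by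
          apply ENNReal.ofReal_le_ofReal
          have hfacpos : (0:ℝ) < (Nat.factorial (2*n+1) : ℝ) := by
            exact_mod_cast Nat.factorial_pos _
          have h1 : ((2:ℝ)^(n+1) - 1)/(2*((n:ℝ)+1)) ≤ (2:ℝ)^n/(((n:ℝ)+1)) := by
            rw [div_le_div_iff₀ (by positivity) (by positivity)]
            have : (2:ℝ)^(n+1) = 2 * 2^n := by ring
            nlinarith [this, sq_nonneg ((n:ℝ)+1)]
          calc (2 : ℝ) ^ n / (Nat.factorial (2 * n + 1) : ℝ) *
                (8 * F^2 * (((2:ℝ)^(n+1) - 1)/(2*((n:ℝ)+1))))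
              ≤ (2 : ℝ) ^ n / (Nat.factorial (2 * n + 1) : ℝ) *
                (8 * F^2 * ((2:ℝ)^n/(((n:ℝ)+1)))) := by
                apply mul_le_mul_of_nonneg_left _ (by positivity)
                apply mul_le_mul_of_nonneg_left h1 (by positivity)
            _ = ahsC n := by
                unfold ahsC
                rw [hF, show (4:ℝ)^n = 2^n * 2^n from by rw [← mul_pow]; norm_num]
                field_simp
  calc (∑' n : ℕ, ENNReal.ofReal ((2 : ℝ) ^ n / (Nat.factorial (2 * n + 1) : ℝ)) *
        ∫⁻ x in Ioo (0 : ℝ) (1 / 2),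
          ENNReal.ofReal (x ^ (2 * n + 1)) *
            ((‖(Nat.factorial n : ℂ) /
                ((1 / 2 + Complex.I / (2 * (Real.sqrt 2 : ℂ))) - (x : ℂ)) ^ (n + 1)‖₊ : ℝ≥0∞) ^ 2 +
              (‖(Nat.factorial n : ℂ) /
                ((1 / 2 + Complex.I / (2 * (Real.sqrt 2 : ℂ))) - (1 - (x : ℂ))) ^ (n + 1)‖₊ : ℝ≥0∞) ^ 2)
          ∂volume)
      ≤ ∑' n : ℕ, ENNReal.ofReal (ahsC n) := ENNReal.tsum_le_tsum hterm
    _ = ENNReal.ofReal (∑' n : ℕ, ahsC n) := by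
        rw [ENNReal.ofReal_tsum_of_nonneg (fun n => by unfold ahsC; positivity) ahsC_summable]
    _ < ⊤ := ENNReal.ofReal_lt_top
end

section
/- For every z in the sector Δ = {z ∈ ℂ : Re z > 0 and |Im z| < Re z} with Re z < 1/4, the integral over {x ∈ (0,1/2) : |z − x| < x/√2} of (x²/2 − |z − x|²)^{-1/2} dx is at least (√2/2)π. -/
open MeasureTheory Set Filter
open scoped ENNReal Topology

private lemma aux_cont {c R ε : ℝ} (hR : 0 < R) (hε : 0 < ε) (hεR : ε ≤ R) :
    ContinuousOn (fun x : ℝ => Real.sqrt 2 * (Real.sqrt (R ^ 2 - (x - c) ^ 2))⁻¹)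
      (Icc (c - R + ε) c) := by
  apply continuousOn_const.mul
  apply ContinuousOn.inv₀
  · exact (Real.continuous_sqrt.comp (by continuity)).continuousOn
  · intro x hx
    obtain ⟨hx1, hx2⟩ := hx
    have h1 : 0 < R ^ 2 - (x - c) ^ 2 := by nlinarith
    exact Real.sqrt_ne_zero'.mpr h1

private lemma aux_integral {c R ε : ℝ} (hR : 0 < R) (hε : 0 < ε) (hεR : ε ≤ R) :
    ∫ x in (c - R + ε)..c, Real.sqrt 2 * (Real.sqrt (R ^ 2 - (x - c) ^ 2))⁻¹
      = Real.sqrt 2 * Real.arcsin (1 - ε / R) := by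
  have hle : c - R + ε ≤ c := by linarith
  have key : ∀ x ∈ uIcc (c - R + ε) c,
      HasDerivAt (fun y => Real.sqrt 2 * Real.arcsin ((y - c) / R))
        (Real.sqrt 2 * (Real.sqrt (R ^ 2 - (x - c) ^ 2))⁻¹) x := by
    intro x hx
    rw [uIcc_of_le hle] at hx
    obtain ⟨hx1, hx2⟩ := hx
    have h1 : (-1 : ℝ) < (x - c) / R := by
      rw [neg_lt, ← neg_div]
      rw [div_lt_one hR]
      linarith
    have h2 : (x - c) / R ≤ 0 := div_nonpos_of_nonpos_of_nonneg (by linarith) hR.le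
    have hd : HasDerivAt (fun y : ℝ => (y - c) / R) (1 / R) x := by
      simpa using ((hasDerivAt_id x).sub_const c).div_const R
    have harc := (Real.hasDerivAt_arcsin h1.ne' (h2.trans_lt one_pos).ne).comp x hd
    have hfin := harc.const_mul (Real.sqrt 2)
    have hs : 0 < R ^ 2 - (x - c) ^ 2 := by nlinarith
    have hv : 1 - ((x - c) / R) ^ 2 = (R ^ 2 - (x - c) ^ 2) / R ^ 2 := by
      field_simp
    refine hfin.congr_deriv (Eq.symm ?_)
    rw [hv, Real.sqrt_div' _ (sq_nonneg R), Real.sqrt_sq hR.le]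
    have hsne : Real.sqrt (R ^ 2 - (x - c) ^ 2) ≠ 0 := Real.sqrt_ne_zero'.mpr hs
    field_simp
  rw [intervalIntegral.integral_eq_sub_of_hasDerivAt key
    (by
      apply ContinuousOn.intervalIntegrable
      rw [uIcc_of_le hle]
      exact aux_cont hR hε hεR)]
  have e1 : (c - c) / R = 0 := by simp
  have e2 : (c - R + ε - c) / R = -(1 - ε / R) := by
    field_simp
    ring
  rw [e1, e2, Real.arcsin_zero, Real.arcsin_neg]
  ring

/-- For `z ∈ Δ` with `Re z < 1/4`, the integral of `(x²/2 - |z-x|²)^{-1/2}` over the set of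
`x ∈ (0,1/2)` with `|z - x| < x/√2` is at least `(√2/2)π`. -/
theorem weight_integral_lower_bound (z : ℂ) (hz : z ∈ Delta) (hre : z.re < 1 / 4) :
    ENNReal.ofReal (Real.sqrt 2 / 2 * Real.pi) ≤
      ∫⁻ x in {x : ℝ | x ∈ Ioo (0 : ℝ) (1 / 2) ∧ ‖z - (x : ℂ)‖ < x / Real.sqrt 2},
        ENNReal.ofReal ((Real.sqrt (x ^ 2 / 2 - ‖z - (x : ℂ)‖ ^ 2))⁻¹) ∂volume := by
  obtain ⟨ha, hb⟩ := hz
  set a := z.re with ha_def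
  set b := z.im with hb_def
  have hb2 : b ^ 2 < a ^ 2 := by
    obtain ⟨h1, h2⟩ := abs_lt.mp hb
    nlinarith
  set R : ℝ := Real.sqrt (2 * (a ^ 2 - b ^ 2)) with hR_def
  have hRsq : R ^ 2 = 2 * (a ^ 2 - b ^ 2) := Real.sq_sqrt (by nlinarith)
  have hRpos : 0 < R := Real.sqrt_pos.mpr (by nlinarith)
  have hRlt : R < 2 * a := by
    nlinarith [sq_nonneg (R - 2 * a), sq_nonneg b]
  have hpt : ∀ x : ℝ, x ^ 2 / 2 - ‖z - (x : ℂ)‖ ^ 2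
      = (R ^ 2 - (x - 2 * a) ^ 2) / 2 := by
    intro x
    rw [Complex.sq_norm, Complex.normSq_apply]
    simp only [Complex.sub_re, Complex.sub_im, Complex.ofReal_re, Complex.ofReal_im, sub_zero,
      ← ha_def, ← hb_def]
    rw [hRsq]; ring
  have hsub : Ioo (2 * a - R) (2 * a) ⊆
      {x : ℝ | x ∈ Ioo (0 : ℝ) (1 / 2) ∧ ‖z - (x : ℂ)‖ < x / Real.sqrt 2} := by
    rintro x ⟨hx1, hx2⟩
    have hx0 : 0 < x := by linarith
    refine ⟨⟨hx0, by linarith⟩, ?_⟩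
    have h1 : 0 < x ^ 2 / 2 - ‖z - (x : ℂ)‖ ^ 2 := by
      rw [hpt x]; nlinarith
    have h2 : (x / Real.sqrt 2) ^ 2 = x ^ 2 / 2 := by
      rw [div_pow, Real.sq_sqrt (by norm_num : (0:ℝ) ≤ 2)]
    have hsq : ‖z - (x : ℂ)‖ ^ 2 < (x / Real.sqrt 2) ^ 2 := by linarith
    exact lt_of_pow_lt_pow_left₀ 2 (by positivity) hsq
  refine le_trans ?_ (lintegral_mono_set hsub)
  have hcongr : (∫⁻ x in Ioo (2 * a - R) (2 * a),
        ENNReal.ofReal ((Real.sqrt (x ^ 2 / 2 - ‖z - (x : ℂ)‖ ^ 2))⁻¹) ∂volume)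
      = ∫⁻ x in Ioo (2 * a - R) (2 * a),
        ENNReal.ofReal (Real.sqrt 2 * (Real.sqrt (R ^ 2 - (x - 2 * a) ^ 2))⁻¹) ∂volume := by
    refine setLIntegral_congr_fun_ae measurableSet_Ioo (ae_of_all _ fun x hx => ?_)
    obtain ⟨hx1, hx2⟩ := hx
    have hs : 0 ≤ R ^ 2 - (x - 2 * a) ^ 2 := by nlinarith
    congr 1
    rw [hpt x, Real.sqrt_div hs 2, inv_div, div_eq_mul_inv]
  rw [hcongr]
  have harg : ∀ n : ℕ, (R / (n + 1)) / R = 1 / (n + 1) := by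
    intro n
    rw [div_div, mul_comm, ← div_div, div_self hRpos.ne']
  have hlim : Tendsto
      (fun n : ℕ => ENNReal.ofReal (Real.sqrt 2 * Real.arcsin (1 - (R / (n + 1)) / R)))
      atTop (nhds (ENNReal.ofReal (Real.sqrt 2 / 2 * Real.pi))) := by
    have h0 : Tendsto (fun n : ℕ => 1 - (R / (n + 1)) / R) atTop (nhds 1) := by
      simp only [harg]
      have := tendsto_one_div_add_atTop_nhds_zero_nat (𝕜 := ℝ)
      simpa using tendsto_const_nhds.sub this
    have h1 : Tendsto (fun n : ℕ => Real.sqrt 2 * Real.arcsin (1 - (R / (n + 1)) / R))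
        atTop (nhds (Real.sqrt 2 * (Real.pi / 2))) := by
      have := (Real.continuous_arcsin.tendsto 1).comp h0
      rw [Real.arcsin_one] at this
      exact this.const_mul _
    have h2 := (ENNReal.continuous_ofReal.tendsto _).comp h1
    rw [show Real.sqrt 2 / 2 * Real.pi = Real.sqrt 2 * (Real.pi / 2) by ring]
    exact h2
  refine le_of_tendsto hlim (Filter.Eventually.of_forall fun n => ?_)
  set ε : ℝ := R / (n + 1) with hε_def
  have hε : 0 < ε := by positivity
  have hεR : ε ≤ R := div_le_self hRpos.le (by push_cast; linarith [Nat.cast_nonneg (α := ℝ) n])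
  have hle : 2 * a - R + ε ≤ 2 * a := by linarith
  have hcont := aux_cont (c := 2 * a) hRpos hε hεR
  have hint : IntegrableOn (fun x : ℝ => Real.sqrt 2 * (Real.sqrt (R ^ 2 - (x - 2 * a) ^ 2))⁻¹)
      (Ioo (2 * a - R + ε) (2 * a)) volume :=
    (hcont.integrableOn_Icc).mono_set Ioo_subset_Icc_self
  have heq : ENNReal.ofReal (Real.sqrt 2 * Real.arcsin (1 - ε / R))
      = ∫⁻ x in Ioo (2 * a - R + ε) (2 * a),
          ENNReal.ofReal (Real.sqrt 2 * (Real.sqrt (R ^ 2 - (x - 2 * a) ^ 2))⁻¹) ∂volume := by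
    rw [← ofReal_integral_eq_lintegral_ofReal hint
      (ae_of_all _ fun x => by positivity)]
    congr 1
    rw [← integral_Ioc_eq_integral_Ioo, ← intervalIntegral.integral_of_le hle]
    exact (aux_integral hRpos hε hεR).symm
  calc ENNReal.ofReal (Real.sqrt 2 * Real.arcsin (1 - (R / (n + 1)) / R))
      = ∫⁻ x in Ioo (2 * a - R + ε) (2 * a),
          ENNReal.ofReal (Real.sqrt 2 * (Real.sqrt (R ^ 2 - (x - 2 * a) ^ 2))⁻¹) ∂volume := heq
    _ ≤ _ := lintegral_mono_set (Ioo_subset_Ioo (by linarith) le_rfl)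
end

section
/- For every q ∈ (0,8) there exists c > 0 such that for all real a ∈ (1/4, 1/2) and b ∈ ℝ satisfying the ellipse equation q(a − 1/2)² + (16 − q) b² = 1, one has a² − b² > 0 and (1/2 − 2a + √(2(a² − b²))) / √(2(a² − b²)) ≥ c. -/
/-!
On the ellipse, `4(16 - q)(a² - b²) = (4a - 1)(16a + 4 - q)`, so for `a ∈ (1/4, 1/2)` and `q < 8`
both factors are positive and `a² - b² > 0`. With `D = 2(a² - b²)` the quotient to bound is
`1 - (2a - 1/2)/√D`, and the factorisation gives
`(2a - 1/2)² / D = (16 - q)(4a - 1) / (2(16a + 4 - q))`, which increases in `a` because `q < 8`.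
Its value `t = (16 - q)/(2(12 - q)) < 1` at `a = 1/2` therefore bounds it, and `c = 1 - √t` works.
-/

open Set

theorem four_mul_sq_sub_sq_eq_of_ellipse {q a b : ℝ}
    (h : q * (a - 1 / 2) ^ 2 + (16 - q) * b ^ 2 = 1) :
    4 * (16 - q) * (a ^ 2 - b ^ 2) = (4 * a - 1) * (16 * a + 4 - q) := by
  linear_combination (-4) * h

theorem sq_sub_sq_pos_of_ellipse {q a b : ℝ} (hq : q < 8) (ha : 1 / 4 < a)
    (h : q * (a - 1 / 2) ^ 2 + (16 - q) * b ^ 2 = 1) :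
    0 < a ^ 2 - b ^ 2 := by
  have hprod : 0 < 4 * (16 - q) * (a ^ 2 - b ^ 2) := by
    rw [four_mul_sq_sub_sq_eq_of_ellipse h]
    exact mul_pos (by linarith) (by linarith)
  exact pos_of_mul_pos_right hprod (by linarith)

theorem sq_sub_le_mul_sq_sub_sq_of_ellipse {q a b : ℝ} (hq : q < 8) (ha₁ : 1 / 4 ≤ a)
    (ha₂ : a ≤ 1 / 2) (h : q * (a - 1 / 2) ^ 2 + (16 - q) * b ^ 2 = 1) :
    (1 / 2 - 2 * a) ^ 2 ≤ (16 - q) / (2 * (12 - q)) * (2 * (a ^ 2 - b ^ 2)) := by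
  rw [div_mul_eq_mul_div, le_div_iff₀ (by linarith)]
  have hgap : 0 ≤ (8 - q) * (2 - 4 * a) * (4 * a - 1) :=
    mul_nonneg (mul_nonneg (by linarith) (by linarith)) (by linarith)
  linear_combination hgap / 2 - four_mul_sq_sub_sq_eq_of_ellipse h / 2

theorem one_sub_sqrt_le_add_div {t y s : ℝ} (hs : 0 < s) (h : y ^ 2 ≤ t * s ^ 2) :
    1 - √t ≤ (y + s) / s := by
  have hy : |y| ≤ √t * s := by
    rw [← Real.sqrt_sq hs.le, ← Real.sqrt_mul' t (sq_nonneg s)]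
    exact Real.abs_le_sqrt h
  rw [le_div_iff₀ hs]
  linarith [neg_abs_le y]

/-- For each `q ∈ (0,8)` there is `c > 0` such that for all `a ∈ (1/4, 1/2)` and `b` on the
ellipse `q(a-1/2)² + (16-q)b² = 1`, one has `a² - b² > 0` and
`(1/2 - 2a + √(2(a²-b²)))/√(2(a²-b²)) ≥ c`. -/
theorem ellipse_uniform_bound (q : ℝ) (hq : q ∈ Ioo (0 : ℝ) 8) :
    ∃ c : ℝ, 0 < c ∧
      ∀ a b : ℝ, a ∈ Ioo (1 / 4 : ℝ) (1 / 2) →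
        q * (a - 1 / 2) ^ 2 + (16 - q) * b ^ 2 = 1 →
        0 < a ^ 2 - b ^ 2 ∧
          c ≤ (1 / 2 - 2 * a + Real.sqrt (2 * (a ^ 2 - b ^ 2))) /
            Real.sqrt (2 * (a ^ 2 - b ^ 2)) := by
  have hq8 : q < 8 := hq.2
  refine ⟨1 - √((16 - q) / (2 * (12 - q))), ?_, ?_⟩
  · rw [sub_pos, Real.sqrt_lt' one_pos, one_pow, div_lt_one (by linarith)]
    linarith
  rintro a b ⟨ha₁, ha₂⟩ h
  have hpos : 0 < a ^ 2 - b ^ 2 := sq_sub_sq_pos_of_ellipse hq8 ha₁ h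
  have hD : 0 ≤ 2 * (a ^ 2 - b ^ 2) := by positivity
  refine ⟨hpos, one_sub_sqrt_le_add_div (Real.sqrt_pos.2 (by positivity)) ?_⟩
  rw [Real.sq_sqrt hD]
  exact sq_sub_le_mul_sq_sub_sq_of_ellipse hq8 ha₁.le ha₂.le h
end

section
/- Let x > 0 and let (a_n)_{n≥0} be a sequence of complex numbers such that ∑_{n=0}^∞ (2^n/(2n+1)!) x^{2n+1} |a_n|² < ∞. Then the power series ∑_{n=0}^∞ (a_n/n!) w^n converges for every w ∈ ℂ with |w| < x/√2; equivalently, limsup_{n→∞} (|a_n|/n!)^{1/n} ≤ √2/x. -/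
open scoped ENNReal NNReal

private lemma fact_odd_le (n : ℕ) :
    Nat.factorial (2 * n + 1) ≤ 4 ^ n * Nat.factorial n ^ 2 * (n + 1) ^ 2 := by
  induction n with
  | zero => simp [Nat.factorial]
  | succ n ih =>
    have h1 : 2 * (n + 1) + 1 = (2 * n + 1) + 2 := by ring
    rw [h1]
    have h2 : Nat.factorial ((2 * n + 1) + 2)
        = ((2 * n + 1) + 2) * (((2 * n + 1) + 1) * Nat.factorial (2 * n + 1)) := by
      rw [Nat.factorial_succ, Nat.factorial_succ]
    rw [h2]
    calc ((2 * n + 1) + 2) * (((2 * n + 1) + 1) * Nat.factorial (2 * n + 1))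
        ≤ ((2 * n + 1) + 2) * (((2 * n + 1) + 1) * (4 ^ n * Nat.factorial n ^ 2 * (n + 1) ^ 2)) := by
          exact Nat.mul_le_mul_left _ (Nat.mul_le_mul_left _ ih)
      _ ≤ 4 ^ (n + 1) * Nat.factorial (n + 1) ^ 2 * ((n + 1) + 1) ^ 2 := by
          rw [Nat.factorial_succ]
          ring_nf
          nlinarith [Nat.factorial_pos n, pow_pos (show 0 < 4 by norm_num) n,
            Nat.one_le_iff_ne_zero.mpr (pow_ne_zero n (show (4:ℕ) ≠ 0 by norm_num))]

/-- If `∑ (2ⁿ/(2n+1)!) x^{2n+1} |aₙ|² < ∞` for some `x > 0`, then the power series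
`∑ (aₙ/n!) wⁿ` converges for every `w` with `|w| < x/√2`. -/
theorem taylor_series_converges (x : ℝ) (hx : 0 < x) (a : ℕ → ℂ)
    (hsum : ∑' n : ℕ,
        ENNReal.ofReal ((2 : ℝ) ^ n / (Nat.factorial (2 * n + 1) : ℝ) * x ^ (2 * n + 1)) *
          (‖a n‖₊ : ℝ≥0∞) ^ 2 < ⊤) :
    ∀ w : ℂ, ‖w‖ < x / Real.sqrt 2 →
      Summable fun n : ℕ => a n / (Nat.factorial n : ℂ) * w ^ n := by
  intro w hw
  set b : ℕ → ℝ := fun n => (2 : ℝ) ^ n / (Nat.factorial (2 * n + 1) : ℝ) * x ^ (2 * n + 1)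
    with hb_def
  have hbpos : ∀ n, 0 < b n := by
    intro n
    have := Nat.factorial_pos (2 * n + 1)
    positivity
  set S : ℝ := (∑' n : ℕ,
      ENNReal.ofReal ((2 : ℝ) ^ n / (Nat.factorial (2 * n + 1) : ℝ) * x ^ (2 * n + 1)) *
        (‖a n‖₊ : ℝ≥0∞) ^ 2).toReal with hS_def
  have hS0 : 0 ≤ S := ENNReal.toReal_nonneg
  have hA : ∀ n, b n * ‖a n‖ ^ 2 ≤ S := by
    intro n
    have hle : ENNReal.ofReal (b n) * (‖a n‖₊ : ℝ≥0∞) ^ 2 ≤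
        ∑' n : ℕ, ENNReal.ofReal ((2 : ℝ) ^ n / (Nat.factorial (2 * n + 1) : ℝ) * x ^ (2 * n + 1)) *
          (‖a n‖₊ : ℝ≥0∞) ^ 2 := ENNReal.le_tsum n
    have := ENNReal.toReal_mono hsum.ne hle
    rw [ENNReal.toReal_mul, ENNReal.toReal_pow, ENNReal.toReal_ofReal (hbpos n).le,
      ENNReal.coe_toReal, coe_nnnorm] at this
    exact this
  set r : ℝ := Real.sqrt 2 * ‖w‖ / x with hr_def
  have h2pos : (0:ℝ) < Real.sqrt 2 := by positivity
  have hr0 : 0 ≤ r := by positivity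
  have hr1 : r < 1 := by
    rw [hr_def, div_lt_one hx]
    calc Real.sqrt 2 * ‖w‖ < Real.sqrt 2 * (x / Real.sqrt 2) :=
          mul_lt_mul_of_pos_left hw h2pos
      _ = x := mul_div_cancel₀ x h2pos.ne'
  set K : ℝ := Real.sqrt (S / x) with hK_def
  have hK0 : 0 ≤ K := Real.sqrt_nonneg _
  have hmaj : Summable (fun n : ℕ => K * (((n:ℝ) + 1) * r ^ n)) := by
    have h1 : Summable (fun n : ℕ => (n:ℝ) ^ 1 * r ^ n) :=
      summable_pow_mul_geometric_of_norm_lt_one 1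
        (by rwa [Real.norm_eq_abs, abs_of_nonneg hr0])
    have h2 : Summable (fun n : ℕ => r ^ n) := summable_geometric_of_lt_one hr0 hr1
    have h3 : Summable (fun n : ℕ => ((n:ℝ) + 1) * r ^ n) := by
      simpa [add_mul, pow_one] using h1.add h2
    exact h3.mul_left K
  apply Summable.of_norm_bounded hmaj
  intro n
  have hNpos : (0:ℝ) < (Nat.factorial n : ℝ) := by exact_mod_cast Nat.factorial_pos n
  have hnorm : ‖a n / (Nat.factorial n : ℂ) * w ^ n‖ = ‖a n‖ / (Nat.factorial n : ℝ) * ‖w‖ ^ n := by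
    rw [norm_mul, norm_div, norm_pow]
    norm_num
  rw [hnorm]
  -- square comparison
  have hL0 : 0 ≤ ‖a n‖ / (Nat.factorial n : ℝ) * ‖w‖ ^ n := by positivity
  have hR0 : 0 ≤ K * (((n:ℝ) + 1) * r ^ n) := by positivity
  have hsq : (‖a n‖ / (Nat.factorial n : ℝ) * ‖w‖ ^ n) ^ 2 ≤ (K * (((n:ℝ) + 1) * r ^ n)) ^ 2 := by
    have hK2 : K ^ 2 = S / x := Real.sq_sqrt (by positivity)
    have hr2 : r ^ 2 = 2 * ‖w‖ ^ 2 / x ^ 2 := by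
      rw [hr_def]
      rw [div_pow, mul_pow, Real.sq_sqrt (by norm_num : (0:ℝ) ≤ 2)]
    have hfact : ((Nat.factorial (2 * n + 1) : ℝ)) ≤
        4 ^ n * (Nat.factorial n : ℝ) ^ 2 * ((n:ℝ) + 1) ^ 2 := by
      have := fact_odd_le n
      exact_mod_cast this
    have hFpos : (0:ℝ) < (Nat.factorial (2 * n + 1) : ℝ) := by
      exact_mod_cast Nat.factorial_pos _
    have ha2 : ‖a n‖ ^ 2 ≤ S / b n := (le_div_iff₀ (hbpos n)).mpr (by linarith [hA n, mul_comm (b n) (‖a n‖^2)])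
    calc (‖a n‖ / (Nat.factorial n : ℝ) * ‖w‖ ^ n) ^ 2
        = ‖a n‖ ^ 2 * ((‖w‖ ^ 2) ^ n / (Nat.factorial n : ℝ) ^ 2) := by ring
      _ ≤ (S / b n) * ((‖w‖ ^ 2) ^ n / (Nat.factorial n : ℝ) ^ 2) := by
          apply mul_le_mul_of_nonneg_right ha2
          positivity
      _ ≤ (K * (((n:ℝ) + 1) * r ^ n)) ^ 2 := by
          have hexp : (K * (((n:ℝ) + 1) * r ^ n)) ^ 2
              = (S / x) * (((n:ℝ) + 1) ^ 2 * (2 * ‖w‖ ^ 2 / x ^ 2) ^ n) := by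
            rw [mul_pow, mul_pow, hK2, ← pow_mul, mul_comm n 2, pow_mul, hr2]
          rw [hexp]
          have hbn : b n = (2 : ℝ) ^ n / (Nat.factorial (2 * n + 1) : ℝ) * x ^ (2 * n + 1) := rfl
          have h4 : (4:ℝ) ^ n = 2 ^ n * 2 ^ n := by rw [← mul_pow]; norm_num
          have key : x ^ (2*n+1) ≤ b n * ((Nat.factorial n : ℝ) ^ 2 * (((n:ℝ)+1) ^ 2 * 2 ^ n)) := by
            rw [hbn, div_mul_eq_mul_div, div_mul_eq_mul_div, le_div_iff₀ hFpos]
            calc x ^ (2*n+1) * (Nat.factorial (2*n+1) : ℝ)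
                ≤ x ^ (2*n+1) * (4 ^ n * (Nat.factorial n : ℝ) ^ 2 * ((n:ℝ)+1) ^ 2) :=
                  mul_le_mul_of_nonneg_left hfact (pow_nonneg hx.le _)
              _ = 2 ^ n * x ^ (2*n+1) * ((Nat.factorial n : ℝ) ^ 2 * (((n:ℝ)+1) ^ 2 * 2 ^ n)) := by
                  rw [h4]; ring
          calc (S / b n) * ((‖w‖ ^ 2) ^ n / (Nat.factorial n : ℝ) ^ 2)
              = S * (‖w‖ ^ 2) ^ n / (b n * (Nat.factorial n : ℝ) ^ 2) := by
                field_simp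
            _ ≤ S * ((‖w‖ ^ 2) ^ n * (((n:ℝ)+1) ^ 2 * 2 ^ n)) / x ^ (2*n+1) := by
                rw [div_le_div_iff₀ (by positivity) (by positivity)]
                calc S * (‖w‖ ^ 2) ^ n * x ^ (2*n+1)
                    ≤ S * (‖w‖ ^ 2) ^ n * (b n * ((Nat.factorial n : ℝ) ^ 2 * (((n:ℝ)+1) ^ 2 * 2 ^ n))) :=
                      mul_le_mul_of_nonneg_left key (by positivity)
                  _ = S * ((‖w‖ ^ 2) ^ n * (((n:ℝ)+1) ^ 2 * 2 ^ n)) * (b n * (Nat.factorial n : ℝ) ^ 2) := by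
                      ring
            _ = S / x * (((n:ℝ) + 1) ^ 2 * (2 * ‖w‖ ^ 2 / x ^ 2) ^ n) := by
                have hxp : x ^ (2*n+1) = (x ^ 2) ^ n * x := by
                  rw [pow_add, pow_mul, pow_one]
                rw [hxp, div_pow, mul_pow]
                field_simp
  calc ‖a n‖ / (Nat.factorial n : ℝ) * ‖w‖ ^ n
      = Real.sqrt ((‖a n‖ / (Nat.factorial n : ℝ) * ‖w‖ ^ n) ^ 2) := (Real.sqrt_sq hL0).symm
    _ ≤ Real.sqrt ((K * (((n:ℝ) + 1) * r ^ n)) ^ 2) := Real.sqrt_le_sqrt hsq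
    _ = K * (((n:ℝ) + 1) * r ^ n) := Real.sqrt_sq hR0
end
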